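/- arXiv:1410.1845 — 7 statements merged into one kernel-verified Lean document; each statement's English description precedes it below -/
import Mathlib

section
/- Let Λ be a well-ordered subset of ℝ ∪ {∞}, and let (x_α)_{α∈Λ} be a multipliable family in a unital Banach algebra E whose members and whose total product are invertible. Then for every γ ∈ Λ, the partial product Π_{α∈Λ, α<γ} x_α is invertible. -/
open Set Classical

noncomputable section

/-- Transfinite partial sums of a family indexed by a well-ordered set `Λ` with
least element `a` and supremum `b`.  `F γ` represents `Σ_{α ∈ Λ, α < γ} x α` for
`γ ∈ Λ ∪ {b}`:  the sum over the empty initial segment is `0`, the successor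
recursion `F (S β) = x β + F β` holds, and at each limit element the partial
sums converge from the left. -/
def WOSumData {E : Type*} [SeminormedAddCommGroup E] {ι : Type*} [LinearOrder ι]
    (Λ : Set ι) (a b : ι) (x F : ι → E) : Prop :=
  F a = 0 ∧
  (∀ β ∈ Λ, ∀ γ ∈ Λ ∪ {b}, β < γ → (∀ α ∈ Λ, α ≤ β ∨ γ ≤ α) → F γ = x β + F β) ∧
  (∀ γ ∈ Λ ∪ {b}, a < γ → (∀ β ∈ Λ, β < γ → ∃ α ∈ Λ, β < α ∧ α < γ) →
    ∀ ε > 0, ∃ β₀ ∈ Λ, β₀ < γ ∧ ∀ β ∈ Λ, β₀ ≤ β → β < γ → ‖F β - F γ‖ < ε)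

/-- Transfinite partial products of a family indexed by a well-ordered set `Λ` with
least element `a` and supremum `b`.  `F γ` represents `Π_{α ∈ Λ, α < γ} x α` for
`γ ∈ Λ ∪ {b}`:  the product over the empty initial segment is `1`, the successor
recursion `F (S β) = x β * F β` holds, and at each limit element the partial
products converge from the left. -/
def WOProdData {E : Type*} [NormedRing E] {ι : Type*} [LinearOrder ι]
    (Λ : Set ι) (a b : ι) (x F : ι → E) : Prop :=
  F a = 1 ∧
  (∀ β ∈ Λ, ∀ γ ∈ Λ ∪ {b}, β < γ → (∀ α ∈ Λ, α ≤ β ∨ γ ≤ α) → F γ = x β * F β) ∧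
  (∀ γ ∈ Λ ∪ {b}, a < γ → (∀ β ∈ Λ, β < γ → ∃ α ∈ Λ, β < α ∧ α < γ) →
    ∀ ε > 0, ∃ β₀ ∈ Λ, β₀ < γ ∧ ∀ β ∈ Λ, β₀ ≤ β → β < γ → ‖F β - F γ‖ < ε)

/-- If a multipliable family in a unital Banach algebra, indexed by a well-ordered
subset of ℝ ∪ {∞}, has invertible members and invertible total product, then all
its partial products are invertible. -/
theorem stmt0 {E : Type*} [NormedRing E] [CompleteSpace E] [NormOneClass E]
    {Λ : Set (WithTop ℝ)} {a b : WithTop ℝ} (hWF : Λ.IsWF)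
    (ha : IsLeast Λ a) (hb : IsLUB Λ b)
    (x F : WithTop ℝ → E) (hF : WOProdData Λ a b x F)
    (hx : ∀ α ∈ Λ, IsUnit (x α))
    (hprod : IsUnit (if b ∈ Λ then x b * F b else F b)) :
    ∀ γ ∈ Λ, IsUnit (F γ) := by
  obtain ⟨hFa, hsucc, hlim⟩ := hF
  intro γ₀ hγ₀
  by_contra hγu
  have hWF' : (Λ ∪ {b}).IsWF := hWF.union isWF_singleton
  -- once a partial product is a non-unit, all later partial products are non-units
  have key : ∀ δ, δ ∈ Λ ∪ {b} → γ₀ ≤ δ → ¬ IsUnit (F δ) := by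
    intro δ hδ
    refine hWF'.induction (P := fun δ => γ₀ ≤ δ → ¬ IsUnit (F δ)) hδ ?_
    intro y hy IH hγ₀y hFy
    rcases eq_or_lt_of_le hγ₀y with rfl | hlt
    · exact hγu hFy
    by_cases hmax : ∃ m ∈ Λ, m < y ∧ ∀ α ∈ Λ, α < y → α ≤ m
    · -- successor case
      obtain ⟨m, hmΛ, hmy, hm⟩ := hmax
      have hside : ∀ α ∈ Λ, α ≤ m ∨ y ≤ α := by
        intro α hα
        by_cases hαy : α < y
        · exact Or.inl (hm α hα hαy)
        · exact Or.inr (not_lt.mp hαy)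
      have hrec := hsucc m hmΛ y hy hmy hside
      have hγ₀m : γ₀ ≤ m := hm γ₀ hγ₀ hlt
      have hFm : ¬ IsUnit (F m) := IH m (Or.inl hmΛ) hmy hγ₀m
      obtain ⟨u, hu⟩ := hx m hmΛ
      apply hFm
      have : F m = ↑u⁻¹ * F y := by
        rw [hrec, ← hu, ← mul_assoc, Units.inv_mul, one_mul]
      rw [this]
      exact u⁻¹.isUnit.mul hFy
    · -- limit case
      push_neg at hmax
      have hcof : ∀ β ∈ Λ, β < y → ∃ α ∈ Λ, β < α ∧ α < y := by
        intro β hβ hβy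
        obtain ⟨α, hαΛ, hαy, hβα⟩ := hmax β hβ hβy
        exact ⟨α, hαΛ, hβα, hαy⟩
      have hay : a < y := lt_of_le_of_lt (ha.2 hγ₀) hlt
      obtain ⟨ε, hε, hball⟩ := Metric.isOpen_iff.mp Units.isOpen (F y) hFy
      obtain ⟨β₀, hβ₀Λ, hβ₀y, hconv⟩ := hlim y hy hay hcof ε hε
      rcases le_total β₀ γ₀ with h | h
      · have hnear := hconv γ₀ hγ₀ h hlt
        have : IsUnit (F γ₀) := hball (by rwa [Metric.mem_ball, dist_eq_norm])
        exact hγu this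
      · have hnear := hconv β₀ hβ₀Λ le_rfl hβ₀y
        have : IsUnit (F β₀) := hball (by rwa [Metric.mem_ball, dist_eq_norm])
        exact IH β₀ (Or.inl hβ₀Λ) hβ₀y h this
  have hγ₀b : γ₀ ≤ b := hb.1 hγ₀
  have hFb : ¬ IsUnit (F b) := key b (Or.inr rfl) hγ₀b
  apply hFb
  by_cases hbΛ : b ∈ Λ
  · rw [if_pos hbΛ] at hprod
    obtain ⟨u, hu⟩ := hx b hbΛ
    have : F b = ↑u⁻¹ * (x b * F b) := by
      rw [← hu, ← mul_assoc, Units.inv_mul, one_mul]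
    rw [this]
    exact u⁻¹.isUnit.mul hprod
  · rwa [if_neg hbΛ] at hprod
end
end

section
/- Let (x_α)_{α∈Λ^{<b}} be a summable family in a unital Banach algebra such that x_α x_β = x_β x_α for all α, β ∈ Λ. Then the family (exp x_α)_{α∈Λ^{<b}} is multipliable, and Π_{α∈Λ^{<b}} exp x_α = exp(Σ_{α∈Λ^{<b}} x_α). -/
/-!
Every `x α` commutes with every partial sum `F γ`: the set of elements commuting with
`x α` is a closed additive submonoid, and by transfinite induction it contains all partial
sums, since it is stable under the successor step and, being closed, under limits. Hence
`exp (x β + F β) = exp (x β) * exp (F β)`, so `γ ↦ exp (F γ)` satisfies the successor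
recursion of the products, and continuity of `exp` carries the limit clause over.
-/

open Set

noncomputable section

section TransfiniteSums

variable {ι E : Type*} [LinearOrder ι]

/-- The limit clause of `WOSumData` and `WOProdData`, which unfold to it. -/
def ConvergesFromLeft [SeminormedAddCommGroup E] (Λ : Set ι) (F : ι → E) (γ : ι) : Prop :=
  ∀ ε > 0, ∃ β₀ ∈ Λ, β₀ < γ ∧ ∀ β ∈ Λ, β₀ ≤ β → β < γ → ‖F β - F γ‖ < ε

namespace ConvergesFromLeft

variable [SeminormedAddCommGroup E] {Λ : Set ι} {F : ι → E} {γ : ι}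

theorem comp {E' : Type*} [SeminormedAddCommGroup E'] {g : E → E'}
    (hg : ContinuousAt g (F γ)) (h : ConvergesFromLeft Λ F γ) :
    ConvergesFromLeft Λ (g ∘ F) γ := by
  intro ε hε
  obtain ⟨δ, hδ, hgδ⟩ := Metric.continuousAt_iff.mp hg ε hε
  obtain ⟨β₀, hβ₀, hβ₀γ, hFδ⟩ := h δ hδ
  refine ⟨β₀, hβ₀, hβ₀γ, fun β hβ hβ₀β hβγ => ?_⟩
  have := hgδ (x := F β) (by rw [dist_eq_norm]; exact hFδ β hβ hβ₀β hβγ)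
  rwa [dist_eq_norm] at this

theorem mem_closure (h : ConvergesFromLeft Λ F γ) : F γ ∈ closure (F '' (Λ ∩ Iio γ)) := by
  refine Metric.mem_closure_iff.mpr fun ε hε => ?_
  obtain ⟨β, hβ, hβγ, hF⟩ := h ε hε
  refine ⟨F β, ⟨β, ⟨hβ, hβγ⟩, rfl⟩, ?_⟩
  rw [dist_comm, dist_eq_norm]
  exact hF β hβ le_rfl hβγ

end ConvergesFromLeft

theorem exists_gap_or_dense (Λ : Set ι) (γ : ι) :
    (∃ β ∈ Λ, β < γ ∧ ∀ α ∈ Λ, α ≤ β ∨ γ ≤ α) ∨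
      ∀ β ∈ Λ, β < γ → ∃ α ∈ Λ, β < α ∧ α < γ := by
  refine or_iff_not_imp_right.mpr fun h => ?_
  push Not at h
  obtain ⟨β, hβ, hβγ, hgap⟩ := h
  exact ⟨β, hβ, hβγ, fun α hα => (le_or_gt α β).imp_right (hgap α hα)⟩

namespace WOSumData

theorem mem_of_isClosed [SeminormedAddCommGroup E] {Λ : Set ι} {a b : ι} {x F : ι → E}
    (hF : WOSumData Λ a b x F) (hwf : (Λ ∪ {b}).IsWF) (ha : a ∈ lowerBounds (Λ ∪ {b}))
    {S : AddSubmonoid E} (hS : IsClosed (S : Set E)) (hx : ∀ α ∈ Λ, x α ∈ S) :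
    ∀ γ ∈ Λ ∪ {b}, F γ ∈ S := by
  obtain ⟨hF₀, hFsucc, hFlim⟩ := hF
  intro γ hγ
  refine hwf.induction (P := fun γ => F γ ∈ S) hγ fun γ hγ IH => ?_
  rcases (ha hγ).eq_or_lt with rfl | haγ
  · exact hF₀ ▸ S.zero_mem
  rcases exists_gap_or_dense Λ γ with ⟨β, hβ, hβγ, hgap⟩ | hdense
  · rw [hFsucc β hβ γ hγ hβγ hgap]
    exact S.add_mem (hx β hβ) (IH β (Or.inl hβ) hβγ)
  · refine closure_minimal ?_ hS (ConvergesFromLeft.mem_closure (hFlim γ hγ haγ hdense))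
    rintro _ ⟨β, ⟨hβ, hβγ⟩, rfl⟩
    exact IH β (Or.inl hβ) hβγ

theorem commute [NormedRing E] {Λ : Set ι} {a b : ι} {x F : ι → E}
    (hF : WOSumData Λ a b x F) (hwf : (Λ ∪ {b}).IsWF) (ha : a ∈ lowerBounds (Λ ∪ {b}))
    {y : E} (hy : ∀ α ∈ Λ, Commute y (x α)) (γ : ι) (hγ : γ ∈ Λ ∪ {b}) :
    Commute y (F γ) := by
  have hcent := hF.mem_of_isClosed hwf ha (S := (Subsemiring.centralizer {y}).toAddSubmonoid)
    (Set.isClosed_centralizer _) (fun α hα => ?_) γ hγ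
  · exact Set.mem_centralizer_iff.mp hcent y rfl
  · exact Set.mem_centralizer_iff.mpr fun _ hy' => hy' ▸ hy α hα

theorem woProdData_exp [NormedRing E] [NormedAlgebra ℚ E] [CompleteSpace E] {Λ : Set ι}
    {a b : ι} {x F : ι → E} (hF : WOSumData Λ a b x F)
    (hcomm : ∀ β ∈ Λ, Commute (x β) (F β)) :
    WOProdData Λ a b (fun α => NormedSpace.exp (x α)) (fun γ => NormedSpace.exp (F γ)) := by
  obtain ⟨hF₀, hFsucc, hFlim⟩ := hF
  refine ⟨by simp only [hF₀, NormedSpace.exp_zero], fun β hβ γ hγ hβγ hgap => ?_,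
    fun γ hγ haγ hdense => ?_⟩
  · simp only [hFsucc β hβ γ hγ hβγ hgap, NormedSpace.exp_add_of_commute (hcomm β hβ)]
  · exact ConvergesFromLeft.comp NormedSpace.exp_continuous.continuousAt
      (hFlim γ hγ haγ hdense)

end WOSumData

end TransfiniteSums

theorem stmt4_general {E : Type*} [NormedRing E] [NormedAlgebra ℝ E] [CompleteSpace E]
    {Λ : Set (WithTop ℝ)} {a b : WithTop ℝ} (hWF : Λ.IsWF)
    (ha : IsLeast Λ a) (hb : IsLUB Λ b)
    (x F : WithTop ℝ → E) (hF : WOSumData Λ a b x F)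
    (hcomm : ∀ α ∈ Λ, ∀ β ∈ Λ, x α * x β = x β * x α) :
    ∃ G : WithTop ℝ → E,
      WOProdData Λ a b (fun α => NormedSpace.exp (x α)) G ∧
      G b = NormedSpace.exp (F b) := by
  let : NormedAlgebra ℚ E := .restrictScalars ℚ ℝ E
  have hwf : (Λ ∪ {b}).IsWF := hWF.union (finite_singleton b).isWF
  have hlow : a ∈ lowerBounds (Λ ∪ {b}) := by
    rintro γ (hγ | rfl)
    exacts [ha.2 hγ, hb.1 ha.1]
  refine ⟨_, hF.woProdData_exp fun β hβ => ?_, rfl⟩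
  exact hF.commute hwf hlow (fun α hα => hcomm β hβ α hα) β (Or.inl hβ)

/-- If a summable family of pairwise commuting elements in a unital Banach algebra
is given, then the family of exponentials is multipliable, and the product of the
exponentials is the exponential of the sum. -/
theorem stmt4 {E : Type*} [NormedRing E] [NormedAlgebra ℝ E] [CompleteSpace E] [NormOneClass E]
    {Λ : Set (WithTop ℝ)} {a b : WithTop ℝ} (hWF : Λ.IsWF)
    (ha : IsLeast Λ a) (hb : IsLUB Λ b)
    (x F : WithTop ℝ → E) (hF : WOSumData Λ a b x F)
    (hcomm : ∀ α ∈ Λ, ∀ β ∈ Λ, x α * x β = x β * x α) :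
    ∃ G : WithTop ℝ → E,
      WOProdData Λ a b (fun α => NormedSpace.exp (x α)) G ∧
      G b = NormedSpace.exp (F b) :=
  stmt4_general hWF ha hb x F hF hcomm
end
end

section
/- A family (x_α)_{α∈Λ^{<b}} in a normed space is absolutely summable if and only if the real family (1 + ‖x_α‖)_{α∈Λ^{<b}} is multipliable. -/
open Set

noncomputable section

/-!
Everything is controlled by the finite subsums over `Λ ∩ Iio b`. Transfinite induction along
`Λ ∪ {b}` shows that partial sums of a family `w ≥ 0` dominate its finite subsums below `γ`, and
partial products of a family `y ≥ 1` its finite subproducts. Conversely, if the finite subsums of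
`w ≥ 0` are bounded, the unordered sums `γ ↦ ∑' α ∈ Λ ∩ Iio γ, w α` are transfinite partial sums.
So partial sums of `‖x‖` bound the finite subsums of `log (1 + ‖x‖) ≤ ‖x‖`, whose partial sums
exponentiate to partial products of `1 + ‖x‖`; and partial products of `1 + ‖x‖` bound the finite
subsums of `‖x‖` through `1 + ∑ ‖x α‖ ≤ ∏ (1 + ‖x α‖)`.
-/

theorem Finset.sum_indicator_eq_sum_filter_mem {κ M : Type*} [AddCommMonoid M] (u : Finset κ)
    (T : Set κ) [DecidablePred (· ∈ T)] (w : κ → M) :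
    ∑ α ∈ u, T.indicator w α = ∑ α ∈ u.filter (· ∈ T), w α := by
  simp only [indicator_apply, ← Finset.sum_filter]

theorem summable_indicator_of_sum_le {κ : Type*} {w : κ → ℝ} {T : Set κ} {M : ℝ}
    (hw : ∀ α, 0 ≤ w α) (hM : ∀ s : Finset κ, ↑s ⊆ T → ∑ α ∈ s, w α ≤ M) :
    Summable (T.indicator w) := by
  classical
  refine summable_of_sum_le (c := M) (indicator_nonneg fun α _ => hw α) fun u => ?_
  rw [Finset.sum_indicator_eq_sum_filter_mem]
  exact hM _ fun α hα => (Finset.mem_filter.1 hα).2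

theorem sum_le_tsum_indicator {κ : Type*} {w : κ → ℝ} {T : Set κ} {s : Finset κ}
    (hw : ∀ α, 0 ≤ w α) (hs : ↑s ⊆ T) (hsum : Summable (T.indicator w)) :
    ∑ α ∈ s, w α ≤ ∑' α, T.indicator w α :=
  calc ∑ α ∈ s, w α = ∑ α ∈ s, T.indicator w α :=
        Finset.sum_congr rfl fun _ hα => (indicator_of_mem (hs hα) w).symm
    _ ≤ ∑' α, T.indicator w α :=
        hsum.sum_le_tsum s fun α _ => indicator_nonneg (fun β _ => hw β) α

theorem Finset.one_add_sum_le_prod_one_add {κ R : Type*} [CommSemiring R] [PartialOrder R]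
    [IsOrderedRing R] {s : Finset κ} {f : κ → R} (hf : ∀ i ∈ s, 0 ≤ f i) :
    1 + ∑ i ∈ s, f i ≤ ∏ i ∈ s, (1 + f i) := by
  classical
  induction s using Finset.induction_on with
  | empty => simp
  | insert c s hc ih =>
    rw [Finset.sum_insert hc, Finset.prod_insert hc]
    have hfc : 0 ≤ f c := hf c (Finset.mem_insert_self c s)
    have hsum : 0 ≤ ∑ i ∈ s, f i :=
      Finset.sum_nonneg fun i hi => hf i (Finset.mem_insert_of_mem hi)
    calc 1 + (f c + ∑ i ∈ s, f i)
        ≤ 1 + (f c + ∑ i ∈ s, f i) + f c * ∑ i ∈ s, f i :=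
          le_add_of_nonneg_right (mul_nonneg hfc hsum)
      _ = (1 + f c) * (1 + ∑ i ∈ s, f i) := by ring
      _ ≤ (1 + f c) * ∏ i ∈ s, (1 + f i) :=
        mul_le_mul_of_nonneg_left (ih fun i hi => hf i (Finset.mem_insert_of_mem hi))
          (add_nonneg zero_le_one hfc)

theorem tsum_indicator_insert {κ M : Type*} [AddCommGroup M] [TopologicalSpace M]
    [IsTopologicalAddGroup M] [T2Space M] {w : κ → M} {T : Set κ} {β : κ} (hβ : β ∉ T)
    (hw : Summable ((insert β T).indicator w)) :
    ∑' α, (insert β T).indicator w α = w β + ∑' α, T.indicator w α := by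
  classical
  rw [hw.tsum_eq_add_tsum_ite β, indicator_of_mem (mem_insert β T)]
  congr 2
  funext α
  by_cases hαβ : α = β
  · subst hαβ; simp [hβ]
  · simp [hαβ, indicator_apply]

section WellOrderedIndex

variable {ι : Type*} [LinearOrder ι] {Λ : Set ι} {a b : ι}

theorem inter_Iio_eq_empty_of_mem_lowerBounds (ha : a ∈ lowerBounds Λ) : Λ ∩ Iio a = ∅ :=
  eq_empty_of_forall_notMem fun _ ⟨hα, hαa⟩ => (ha hα).not_gt hαa

theorem inter_Iio_eq_insert_of_forall_le_or_ge {β γ : ι} (hβ : β ∈ Λ) (hβγ : β < γ)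
    (hgap : ∀ α ∈ Λ, α ≤ β ∨ γ ≤ α) : Λ ∩ Iio γ = insert β (Λ ∩ Iio β) := by
  ext α
  simp only [mem_inter_iff, mem_Iio, mem_insert_iff]
  constructor
  · rintro ⟨hα, hαγ⟩
    rcases (hgap α hα).resolve_right hαγ.not_ge |>.eq_or_lt with rfl | hαβ
    exacts [Or.inl rfl, Or.inr ⟨hα, hαβ⟩]
  · rintro (rfl | ⟨hα, hαβ⟩)
    exacts [⟨hβ, hβγ⟩, ⟨hα, hαβ.trans hβγ⟩]

def IsLimitIn (Λ : Set ι) (γ : ι) : Prop :=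
  ∀ β ∈ Λ, β < γ → ∃ α ∈ Λ, β < α ∧ α < γ

theorem IsLimitIn.exists_mem_finset_lt {γ β₀ : ι} (hγ : IsLimitIn Λ γ) (hβ₀ : β₀ ∈ Λ ∩ Iio γ)
    {s : Finset ι} (hs : ↑s ⊆ Λ ∩ Iio γ) : ∃ β ∈ Λ, β₀ < β ∧ β < γ ∧ ↑s ⊆ Iio β := by
  classical
  have hne : (insert β₀ s).Nonempty := Finset.insert_nonempty β₀ s
  have hsub : ↑(insert β₀ s) ⊆ Λ ∩ Iio γ := by
    rw [Finset.coe_insert]; exact insert_subset hβ₀ hs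
  obtain ⟨α, hα, hmα, hαγ⟩ := hγ _ (hsub ((insert β₀ s).max'_mem hne)).1
    (hsub ((insert β₀ s).max'_mem hne)).2
  refine ⟨α, hα, ((insert β₀ s).le_max' β₀ (Finset.mem_insert_self _ _)).trans_lt hmα, hαγ,
    fun δ hδ => ((insert β₀ s).le_max' δ (Finset.mem_insert_of_mem hδ)).trans_lt hmα⟩

theorem Set.IsWF.induction_succ_limit (hWF : Λ.IsWF) (ha : IsLeast Λ a) (hb : b ∈ upperBounds Λ)
    {P : ι → Prop} (zero : P a)
    (succ : ∀ β ∈ Λ, ∀ γ ∈ Λ ∪ {b}, β < γ → (∀ α ∈ Λ, α ≤ β ∨ γ ≤ α) → P β → P γ)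
    (limit : ∀ γ ∈ Λ ∪ {b}, a < γ → IsLimitIn Λ γ → (∀ β ∈ Λ, β < γ → P β) → P γ) :
    ∀ γ ∈ Λ ∪ {b}, P γ := by
  intro γ hγ
  refine (hWF.union (finite_singleton b).isWF).induction hγ fun γ hγ IH => ?_
  by_cases hsucc : ∃ β ∈ Λ, β < γ ∧ ∀ α ∈ Λ, α ≤ β ∨ γ ≤ α
  · obtain ⟨β, hβ, hβγ, hgap⟩ := hsucc
    exact succ β hβ γ hγ hβγ hgap (IH β (Or.inl hβ) hβγ)
  have haγ : a ≤ γ := hγ.elim (fun h => ha.2 h) fun h => (mem_singleton_iff.1 h) ▸ hb ha.1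
  rcases haγ.lt_or_eq with haγ | rfl
  · push Not at hsucc
    exact limit γ hγ haγ hsucc fun β hβ hβγ => IH β (Or.inl hβ) hβγ
  · exact zero

theorem IsLimitIn.le_of_forall_finset_le {Φ : Finset ι → ℝ} {F : ι → ℝ} {γ : ι}
    (hγ : IsLimitIn Λ γ)
    (hF : ∀ ε > 0, ∃ β₀ ∈ Λ, β₀ < γ ∧ ∀ β ∈ Λ, β₀ ≤ β → β < γ → ‖F β - F γ‖ < ε)
    (IH : ∀ β ∈ Λ, β < γ → ∀ s : Finset ι, ↑s ⊆ Λ ∩ Iio β → Φ s ≤ F β)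
    {s : Finset ι} (hs : ↑s ⊆ Λ ∩ Iio γ) : Φ s ≤ F γ := by
  refine le_of_forall_pos_lt_add fun ε hε => ?_
  obtain ⟨β₀, hβ₀, hβ₀γ, hclose⟩ := hF ε hε
  obtain ⟨β, hβ, hβ₀β, hβγ, hsβ⟩ := hγ.exists_mem_finset_lt ⟨hβ₀, hβ₀γ⟩ hs
  have hFβ := hclose β hβ hβ₀β.le hβγ
  rw [Real.norm_eq_abs, abs_sub_lt_iff] at hFβ
  calc Φ s ≤ F β := IH β hβ hβγ s (subset_inter (hs.trans inter_subset_left) hsβ)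
    _ < F γ + ε := by linarith

theorem WOSumData.sum_le (hWF : Λ.IsWF) (ha : IsLeast Λ a) (hb : b ∈ upperBounds Λ)
    {w F : ι → ℝ} (hw : ∀ α, 0 ≤ w α) (hF : WOSumData Λ a b w F) :
    ∀ γ ∈ Λ ∪ {b}, ∀ s : Finset ι, ↑s ⊆ Λ ∩ Iio γ → ∑ α ∈ s, w α ≤ F γ := by
  classical
  obtain ⟨hzero, hsucc, hlim⟩ := hF
  refine hWF.induction_succ_limit ha hb ?_ ?_ fun γ hγ haγ hγlim IH s hs =>
    hγlim.le_of_forall_finset_le (hlim γ hγ haγ hγlim) IH hs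
  · intro s hs
    rw [inter_Iio_eq_empty_of_mem_lowerBounds ha.2, subset_empty_iff, Finset.coe_eq_empty] at hs
    simp [hs, hzero]
  · intro β hβ γ hγ hβγ hgap IH s hs
    rw [inter_Iio_eq_insert_of_forall_le_or_ge hβ hβγ hgap] at hs
    calc ∑ α ∈ s, w α ≤ ∑ α ∈ insert β (s.erase β), w α :=
          Finset.sum_le_sum_of_subset_of_nonneg (Finset.insert_erase_subset β s) fun α _ _ => hw α
      _ = w β + ∑ α ∈ s.erase β, w α := Finset.sum_insert (Finset.notMem_erase β s)
      _ ≤ w β + F β := by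
          gcongr
          exact IH _ (by rw [Finset.coe_erase]; exact sdiff_singleton_subset_iff.2 hs)
      _ = F γ := (hsucc β hβ γ hγ hβγ hgap).symm

theorem WOProdData.prod_le (hWF : Λ.IsWF) (ha : IsLeast Λ a) (hb : b ∈ upperBounds Λ)
    {y G : ι → ℝ} (hy : ∀ α, 1 ≤ y α) (hG : WOProdData Λ a b y G) :
    ∀ γ ∈ Λ ∪ {b}, ∀ s : Finset ι, ↑s ⊆ Λ ∩ Iio γ → ∏ α ∈ s, y α ≤ G γ := by
  classical
  obtain ⟨hzero, hsucc, hlim⟩ := hG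
  refine hWF.induction_succ_limit ha hb ?_ ?_ fun γ hγ haγ hγlim IH s hs =>
    hγlim.le_of_forall_finset_le (hlim γ hγ haγ hγlim) IH hs
  · intro s hs
    rw [inter_Iio_eq_empty_of_mem_lowerBounds ha.2, subset_empty_iff, Finset.coe_eq_empty] at hs
    simp [hs, hzero]
  · intro β hβ γ hγ hβγ hgap IH s hs
    rw [inter_Iio_eq_insert_of_forall_le_or_ge hβ hβγ hgap] at hs
    have IHerase := IH _ (by rw [Finset.coe_erase]; exact sdiff_singleton_subset_iff.2 hs)
    have hyβ : 0 ≤ y β := zero_le_one.trans (hy β)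
    rw [hsucc β hβ γ hγ hβγ hgap]
    by_cases hβs : β ∈ s
    · rw [← Finset.mul_prod_erase s y hβs]
      exact mul_le_mul_of_nonneg_left IHerase hyβ
    · have hGβ : 1 ≤ G β := by simpa using IH ∅ (by simp)
      rw [Finset.erase_eq_of_notMem hβs] at IHerase
      exact IHerase.trans (le_mul_of_one_le_left (zero_le_one.trans hGβ) (hy β))

theorem woSumData_tsum_indicator (ha : IsLeast Λ a) (hb : b ∈ upperBounds Λ) {w : ι → ℝ}
    (hw : ∀ α, 0 ≤ w α) {M : ℝ} (hM : ∀ s : Finset ι, ↑s ⊆ Λ ∩ Iio b → ∑ α ∈ s, w α ≤ M) :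
    WOSumData Λ a b w fun γ => ∑' α, (Λ ∩ Iio γ).indicator w α := by
  classical
  have hsummable : ∀ γ ∈ Λ ∪ {b}, Summable ((Λ ∩ Iio γ).indicator w) := by
    intro γ hγ
    have hγb : γ ≤ b := hγ.elim (fun h => hb h) fun h => (mem_singleton_iff.1 h).le
    exact summable_indicator_of_sum_le hw fun s hs =>
      hM s (hs.trans (inter_subset_inter_right _ (Iio_subset_Iio hγb)))
  refine ⟨?_, ?_, ?_⟩
  · simp [inter_Iio_eq_empty_of_mem_lowerBounds ha.2]
  · intro β hβ γ hγ hβγ hgap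
    have hsummableγ := hsummable γ hγ
    dsimp only
    rw [inter_Iio_eq_insert_of_forall_le_or_ge hβ hβγ hgap] at hsummableγ ⊢
    exact tsum_indicator_insert (fun h => lt_irrefl β h.2) hsummableγ
  · intro γ hγ haγ (hγlim : IsLimitIn Λ γ) ε hε
    obtain ⟨u, hu⟩ := ((hsummable γ hγ).hasSum.eventually
      (Ioi_mem_nhds (sub_lt_self (∑' α, (Λ ∩ Iio γ).indicator w α) hε))).exists
    rw [Finset.sum_indicator_eq_sum_filter_mem] at hu
    obtain ⟨β₀, hβ₀, -, hβ₀γ, huβ₀⟩ := hγlim.exists_mem_finset_lt ⟨ha.1, haγ⟩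
      (s := u.filter (· ∈ Λ ∩ Iio γ)) fun α hα => (Finset.mem_filter.1 hα).2
    refine ⟨β₀, hβ₀, hβ₀γ, fun β hβ hβ₀β hβγ => ?_⟩
    have hle : ∑ α ∈ u.filter (· ∈ Λ ∩ Iio γ), w α ≤ ∑' α, (Λ ∩ Iio β).indicator w α :=
      sum_le_tsum_indicator hw (fun α hα => ⟨(Finset.mem_filter.1 hα).2.1,
        (huβ₀ hα).trans_le hβ₀β⟩) (hsummable β (Or.inl hβ))
    have hmono : ∑' α, (Λ ∩ Iio β).indicator w α ≤ ∑' α, (Λ ∩ Iio γ).indicator w α :=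
      (hsummable β (Or.inl hβ)).tsum_le_tsum
        (indicator_le_indicator_of_subset
          (inter_subset_inter_right _ (Iio_subset_Iio hβγ.le)) hw)
        (hsummable γ hγ)
    rw [Real.norm_eq_abs, abs_sub_lt_iff]
    constructor <;> linarith

theorem WOSumData.exp {w F : ι → ℝ} (hF : WOSumData Λ a b w F) :
    WOProdData Λ a b (fun α => Real.exp (w α)) fun γ => Real.exp (F γ) := by
  obtain ⟨hzero, hsucc, hlim⟩ := hF
  refine ⟨by simp [hzero], fun β hβ γ hγ hβγ hgap => ?_, fun γ hγ haγ hγlim ε hε => ?_⟩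
  · dsimp only
    rw [hsucc β hβ γ hγ hβγ hgap, Real.exp_add]
  · obtain ⟨δ, hδ, hexp⟩ := Metric.continuousAt_iff.1 Real.continuous_exp.continuousAt ε hε
    obtain ⟨β₀, hβ₀, hβ₀γ, hclose⟩ := hlim γ hγ haγ hγlim δ hδ
    exact ⟨β₀, hβ₀, hβ₀γ, fun β hβ hβ₀β hβγ => hexp (hclose β hβ hβ₀β hβγ)⟩

end WellOrderedIndex

theorem stmt7_general {E : Type*} [NormedAddCommGroup E]
    {Λ : Set (WithTop ℝ)} {a b : WithTop ℝ} (hWF : Λ.IsWF)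
    (ha : IsLeast Λ a) (hb : IsLUB Λ b)
    (x : WithTop ℝ → E) :
    (∃ F : WithTop ℝ → ℝ, WOSumData Λ a b (fun α => ‖x α‖) F) ↔
      (∃ G : WithTop ℝ → ℝ, WOProdData Λ a b (fun α => 1 + ‖x α‖) G) := by
  have hpos : ∀ α, 0 < 1 + ‖x α‖ := fun α => by positivity
  constructor
  · rintro ⟨F, hF⟩
    have hlog : ∀ s : Finset (WithTop ℝ), ↑s ⊆ Λ ∩ Iio b →
        ∑ α ∈ s, Real.log (1 + ‖x α‖) ≤ F b := fun s hs =>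
      (Finset.sum_le_sum fun α _ => by linarith [Real.log_le_sub_one_of_pos (hpos α)]).trans
        (hF.sum_le hWF ha hb.1 (fun α => norm_nonneg (x α)) b (Or.inr rfl) s hs)
    have hL := woSumData_tsum_indicator ha hb.1
      (fun α => Real.log_nonneg (le_add_of_nonneg_right (norm_nonneg (x α)))) hlog
    exact ⟨_, by simpa only [Real.exp_log (hpos _)] using hL.exp⟩
  · rintro ⟨G, hG⟩
    refine ⟨_, woSumData_tsum_indicator ha hb.1 (fun α => norm_nonneg (x α)) (M := G b - 1)
      fun s hs => ?_⟩
    have hprod := hG.prod_le hWF ha hb.1 (fun α => le_add_of_nonneg_right (norm_nonneg (x α)))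
      b (Or.inr rfl) s hs
    linarith [Finset.one_add_sum_le_prod_one_add (s := s) fun α _ => norm_nonneg (x α)]

/-- A family in a normed space is absolutely summable iff the real family
(1 + ‖x α‖) is multipliable. -/
theorem stmt7 {E : Type*} [NormedAddCommGroup E] [NormedSpace ℝ E]
    {Λ : Set (WithTop ℝ)} {a b : WithTop ℝ} (hWF : Λ.IsWF)
    (ha : IsLeast Λ a) (hb : IsLUB Λ b)
    (x : WithTop ℝ → E) :
    (∃ F : WithTop ℝ → ℝ, WOSumData Λ a b (fun α => ‖x α‖) F) ↔
      (∃ G : WithTop ℝ → ℝ, WOProdData Λ a b (fun α => 1 + ‖x α‖) G) :=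
  stmt7_general hWF ha hb x
end
end

section
/- Let (p_α)_{α∈Λ^{<b}} be real numbers with 0 ≤ p_α < 1 for all α. Then Π_{α∈Λ^{<b}} (1 − p_α) = 0 if and only if the family (p_α)_{α∈Λ^{<b}} is not summable. -/
open Set

noncomputable section

/-- For real numbers 0 ≤ p α < 1, the product Π (1 − p α) vanishes iff the family
(p α) is not summable. -/
theorem stmt9 {Λ : Set (WithTop ℝ)} {a b : WithTop ℝ} (hWF : Λ.IsWF)
    (ha : IsLeast Λ a) (hb : IsLUB Λ b)
    (p : WithTop ℝ → ℝ)
    (hp : ∀ α ∈ Λ, α < b → 0 ≤ p α ∧ p α < 1)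
    (G : WithTop ℝ → ℝ) (hG : WOProdData Λ a b (fun α => 1 - p α) G) :
    G b = 0 ↔ ¬ (∃ F : WithTop ℝ → ℝ, WOSumData Λ a b p F) := by
  classical
  obtain ⟨hG1, hGsucc, hGlim⟩ := hG
  have hbU : b ∈ Λ ∪ {b} := Or.inr rfl
  have haU : a ∈ Λ ∪ {b} := Or.inl ha.1
  have hle_b : ∀ γ ∈ Λ ∪ {b}, γ ≤ b := by
    rintro γ (hγ | hγ)
    · exact hb.1 hγ
    · rw [Set.mem_singleton_iff] at hγ; exact le_of_eq hγ
  have ha_le : ∀ γ ∈ Λ ∪ {b}, a ≤ γ := by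
    rintro γ (hγ | hγ)
    · exact ha.2 hγ
    · rw [Set.mem_singleton_iff] at hγ; subst hγ; exact hb.1 ha.1
  have hWFU : (Λ ∪ {b}).WellFoundedOn (· < ·) := by
    rw [Set.union_singleton]; exact hWF.insert b
  have hmemΛ : ∀ β ∈ Λ ∪ {b}, ∀ γ ∈ Λ ∪ {b}, β < γ → β ∈ Λ := by
    rintro β (hβ | hβ) γ hγ hlt
    · exact hβ
    · rw [Set.mem_singleton_iff] at hβ; subst hβ
      exact absurd (lt_of_lt_of_le hlt (hle_b γ hγ)) (lt_irrefl β)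
  have hmaxΛ : ∀ x ∈ Λ, ∀ y ∈ Λ, max x y ∈ Λ := by
    intro x hx y hy
    rcases le_total x y with h | h
    · rw [max_eq_right h]; exact hy
    · rw [max_eq_left h]; exact hx
  have hsqueeze : ∀ x z : ℝ, (∀ ε : ℝ, 0 < ε → x ≤ z + ε) → x ≤ z := by
    intro x z h
    by_contra hc
    push_neg at hc
    have := h ((x - z) / 2) (by linarith)
    linarith
  have hdich : ∀ γ ∈ Λ ∪ {b}, a < γ →
      (∃ δ ∈ Λ, δ < γ ∧ ∀ α ∈ Λ, α ≤ δ ∨ γ ≤ α) ∨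
      (∀ β ∈ Λ, β < γ → ∃ α ∈ Λ, β < α ∧ α < γ) := by
    intro γ _ _
    by_cases h : ∀ β ∈ Λ, β < γ → ∃ α ∈ Λ, β < α ∧ α < γ
    · exact Or.inr h
    · left
      push_neg at h
      obtain ⟨δ, hδΛ, hδγ, hmax⟩ := h
      refine ⟨δ, hδΛ, hδγ, fun α hα => ?_⟩
      rcases le_or_gt α δ with h' | h'
      · exact Or.inl h'
      · exact Or.inr (hmax α hα h')
  -- L1 : nonnegativity and antitonicity of G
  have hL1 : ∀ γ ∈ Λ ∪ {b}, 0 ≤ G γ ∧ ∀ β ∈ Λ ∪ {b}, β ≤ γ → G γ ≤ G β := by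
    intro γ hγ
    refine Set.WellFoundedOn.induction
      (P := fun y => 0 ≤ G y ∧ ∀ β ∈ Λ ∪ {b}, β ≤ y → G y ≤ G β) hWFU hγ ?_
    intro y hy IH
    rcases eq_or_lt_of_le (ha_le y hy) with hay | hay
    · subst hay
      constructor
      · rw [hG1]; exact zero_le_one
      · intro β hβ hβa
        have hβ' : β = a := le_antisymm hβa (ha_le β hβ)
        rw [hβ']
    · rcases hdich y hy hay with ⟨δ, hδΛ, hδy, hδmax⟩ | hlim
      · have hrec : G y = (1 - p δ) * G δ := hGsucc δ hδΛ y hy hδy hδmax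
        have hpδ := hp δ hδΛ (lt_of_lt_of_le hδy (hle_b y hy))
        obtain ⟨hGδ0, hGδm⟩ := IH δ (Or.inl hδΛ) hδy
        have hGy0 : 0 ≤ G y := by
          rw [hrec]; exact mul_nonneg (by linarith [hpδ.2]) hGδ0
        refine ⟨hGy0, fun β hβ hβy => ?_⟩
        rcases eq_or_lt_of_le hβy with h | h
        · rw [h]
        · have hβΛ : β ∈ Λ := hmemΛ β hβ y hy h
          have hβδ : β ≤ δ := (hδmax β hβΛ).resolve_right
            (fun hc => absurd (lt_of_le_of_lt hc h) (lt_irrefl y))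
          calc G y = (1 - p δ) * G δ := hrec
            _ ≤ 1 * G δ := mul_le_mul_of_nonneg_right (by linarith [hpδ.1]) hGδ0
            _ = G δ := one_mul _
            _ ≤ G β := hGδm β hβ hβδ
      · have hlimG := hGlim y hy hay hlim
        have key0 : 0 ≤ G y := by
          have h0 : ∀ ε : ℝ, 0 < ε → 0 ≤ G y + ε := by
            intro ε hε
            obtain ⟨β₀, hβ₀Λ, hβ₀y, hnear⟩ := hlimG ε hε
            have h1 := hnear β₀ hβ₀Λ le_rfl hβ₀y
            rw [Real.norm_eq_abs, abs_lt] at h1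
            have h2 := (IH β₀ (Or.inl hβ₀Λ) hβ₀y).1
            linarith [h1.1, h1.2]
          exact hsqueeze 0 (G y) h0
        refine ⟨key0, fun β hβ hβy => ?_⟩
        rcases eq_or_lt_of_le hβy with h | h
        · rw [h]
        · have hβΛ : β ∈ Λ := hmemΛ β hβ y hy h
          refine hsqueeze (G y) (G β) ?_
          intro ε hε
          obtain ⟨β₀, hβ₀Λ, hβ₀y, hnear⟩ := hlimG ε hε
          have hmΛ : max β β₀ ∈ Λ := hmaxΛ β hβΛ β₀ hβ₀Λ
          have hmy : max β β₀ < y := max_lt h hβ₀y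
          have h1 := hnear (max β β₀) hmΛ (le_max_right _ _) hmy
          rw [Real.norm_eq_abs, abs_lt] at h1
          have h2 := (IH (max β β₀) (Or.inl hmΛ) hmy).2 β (Or.inl hβΛ) (le_max_left _ _)
          linarith [h1.1, h1.2]
  have hGle1 : ∀ γ ∈ Λ ∪ {b}, G γ ≤ 1 := by
    intro γ hγ
    have := (hL1 γ hγ).2 a haU (ha_le γ hγ)
    rwa [hG1] at this
  constructor
  · -- if a summable family exists then G b > 0, contradiction
    intro hGb0 hex
    obtain ⟨F, hF1, hFsucc, hFlim⟩ := hex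
    -- L2 : monotonicity of F
    have hL2 : ∀ γ ∈ Λ ∪ {b}, ∀ β ∈ Λ ∪ {b}, β ≤ γ → F β ≤ F γ := by
      intro γ hγ
      refine Set.WellFoundedOn.induction
        (P := fun y => ∀ β ∈ Λ ∪ {b}, β ≤ y → F β ≤ F y) hWFU hγ ?_
      intro y hy IH β hβ hβy
      rcases eq_or_lt_of_le hβy with h | h
      · rw [h]
      · have hβΛ : β ∈ Λ := hmemΛ β hβ y hy h
        have hay : a < y := lt_of_le_of_lt (ha_le β (Or.inl hβΛ)) h
        rcases hdich y hy hay with ⟨δ, hδΛ, hδy, hδmax⟩ | hlim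
        · have hrec : F y = p δ + F δ := hFsucc δ hδΛ y hy hδy hδmax
          have hpδ := hp δ hδΛ (lt_of_lt_of_le hδy (hle_b y hy))
          have hβδ : β ≤ δ := (hδmax β hβΛ).resolve_right
            (fun hc => absurd (lt_of_le_of_lt hc h) (lt_irrefl y))
          have := IH δ (Or.inl hδΛ) hδy β hβ hβδ
          rw [hrec]; linarith [hpδ.1]
        · refine hsqueeze (F β) (F y) ?_
          intro ε hε
          obtain ⟨β₀, hβ₀Λ, hβ₀y, hnear⟩ := hFlim y hy hay hlim ε hε
          have hmΛ : max β β₀ ∈ Λ := hmaxΛ β hβΛ β₀ hβ₀Λ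
          have hmy : max β β₀ < y := max_lt h hβ₀y
          have h1 := hnear (max β β₀) hmΛ (le_max_right _ _) hmy
          rw [Real.norm_eq_abs, abs_lt] at h1
          have h2 := IH (max β β₀) (Or.inl hmΛ) hmy β hβ (le_max_left _ _)
          linarith [h1.1, h1.2]
    -- L3 : key inequality
    have hL3 : ∀ γ ∈ Λ ∪ {b}, ∀ β ∈ Λ ∪ {b}, β ≤ γ →
        (1 - (F γ - F β)) * G β ≤ G γ := by
      intro γ hγ
      refine Set.WellFoundedOn.induction
        (P := fun y => ∀ β ∈ Λ ∪ {b}, β ≤ y → (1 - (F y - F β)) * G β ≤ G y) hWFU hγ ?_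
      intro y hy IH β hβ hβy
      rcases eq_or_lt_of_le hβy with h | h
      · rw [h]; simp
      · have hβΛ : β ∈ Λ := hmemΛ β hβ y hy h
        have hay : a < y := lt_of_le_of_lt (ha_le β (Or.inl hβΛ)) h
        have hGβ0 := (hL1 β hβ).1
        have hGβ1 := hGle1 β hβ
        rcases hdich y hy hay with ⟨δ, hδΛ, hδy, hδmax⟩ | hlim
        · have hrecG : G y = (1 - p δ) * G δ := hGsucc δ hδΛ y hy hδy hδmax
          have hrecF : F y = p δ + F δ := hFsucc δ hδΛ y hy hδy hδmax
          have hpδ := hp δ hδΛ (lt_of_lt_of_le hδy (hle_b y hy))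
          have hβδ : β ≤ δ := (hδmax β hβΛ).resolve_right
            (fun hc => absurd (lt_of_le_of_lt hc h) (lt_irrefl y))
          have hIH := IH δ (Or.inl hδΛ) hδy β hβ hβδ
          have hs : 0 ≤ F δ - F β := sub_nonneg.2 (hL2 δ (Or.inl hδΛ) β hβ hβδ)
          have h₁ : (1 - p δ) * ((1 - (F δ - F β)) * G β) ≤ (1 - p δ) * G δ :=
            mul_le_mul_of_nonneg_left hIH (by linarith [hpδ.2])
          have h₂ : 0 ≤ p δ * ((F δ - F β) * G β) :=
            mul_nonneg hpδ.1 (mul_nonneg hs hGβ0)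
          rw [hrecG, hrecF]
          nlinarith [h₁, h₂]
        · refine hsqueeze ((1 - (F y - F β)) * G β) (G y) ?_
          intro ε hε
          obtain ⟨βg, hβgΛ, hβgy, hnearG⟩ := hGlim y hy hay hlim (ε / 2) (half_pos hε)
          obtain ⟨βf, hβfΛ, hβfy, hnearF⟩ := hFlim y hy hay hlim (ε / 2) (half_pos hε)
          set m := max β (max βg βf) with hm
          have hmΛ : m ∈ Λ := hmaxΛ β hβΛ _ (hmaxΛ βg hβgΛ βf hβfΛ)
          have hmy : m < y := max_lt h (max_lt hβgy hβfy)
          have h1 := hnearG m hmΛ (le_trans (le_max_left _ _) (le_max_right _ _)) hmy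
          have h2 := hnearF m hmΛ (le_trans (le_max_right _ _) (le_max_right _ _)) hmy
          rw [Real.norm_eq_abs, abs_lt] at h1 h2
          have hIHm := IH m (Or.inl hmΛ) hmy β hβ (le_max_left _ _)
          have hexp : (1 - (F y - F β)) * G β
              = (1 - (F m - F β)) * G β + (F m - F y) * G β := by ring
          have h3 : (F m - F y) * G β ≤ (ε / 2) * G β :=
            mul_le_mul_of_nonneg_right (by linarith [h2.2]) hGβ0
          have h4 : (ε / 2) * G β ≤ ε / 2 := by nlinarith
          linarith [h1.2]
    -- L4 : positivity of G
    have hL4 : ∀ γ ∈ Λ ∪ {b}, 0 < G γ := by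
      intro γ hγ
      refine Set.WellFoundedOn.induction (P := fun y => 0 < G y) hWFU hγ ?_
      intro y hy IH
      rcases eq_or_lt_of_le (ha_le y hy) with hay | hay
      · rw [← hay, hG1]; exact one_pos
      · rcases hdich y hy hay with ⟨δ, hδΛ, hδy, hδmax⟩ | hlim
        · have hrec : G y = (1 - p δ) * G δ := hGsucc δ hδΛ y hy hδy hδmax
          have hpδ := hp δ hδΛ (lt_of_lt_of_le hδy (hle_b y hy))
          rw [hrec]
          exact mul_pos (by linarith [hpδ.2]) (IH δ (Or.inl hδΛ) hδy)
        · obtain ⟨β₀, hβ₀Λ, hβ₀y, hnear⟩ := hFlim y hy hay hlim (1 / 2) one_half_pos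
          have h1 := hnear β₀ hβ₀Λ le_rfl hβ₀y
          rw [Real.norm_eq_abs, abs_lt] at h1
          have hkey := hL3 y hy β₀ (Or.inl hβ₀Λ) hβ₀y.le
          have hGβ₀ := IH β₀ (Or.inl hβ₀Λ) hβ₀y
          have h2 : (1 / 2 : ℝ) * G β₀ ≤ (1 - (F y - F β₀)) * G β₀ :=
            mul_le_mul_of_nonneg_right (by linarith [h1.1]) hGβ₀.le
          have h3 : (0 : ℝ) < (1 / 2) * G β₀ := by positivity
          linarith
    exact (hL4 b hbU).ne' hGb0
  · -- if G b ≠ 0 then a summable family exists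
    intro hns
    by_contra hGbne
    have hGbpos : 0 < G b := lt_of_le_of_ne (hL1 b hbU).1 (Ne.symm hGbne)
    refine hns ?_
    -- finite products dominate G
    have hM : ∀ γ ∈ Λ ∪ {b}, ∀ s : Finset (WithTop ℝ),
        (∀ x ∈ s, x ∈ Λ ∧ x < γ) → G γ ≤ ∏ α ∈ s, (1 - p α) := by
      intro γ hγ
      refine Set.WellFoundedOn.induction
        (P := fun y => ∀ s : Finset (WithTop ℝ),
          (∀ x ∈ s, x ∈ Λ ∧ x < y) → G y ≤ ∏ α ∈ s, (1 - p α)) hWFU hγ ?_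
      intro y hy IH s hs
      rcases eq_or_lt_of_le (ha_le y hy) with hay | hay
      · have hse : s = ∅ := Finset.eq_empty_of_forall_notMem
          (fun x hx => absurd ((hay ▸ (hs x hx).2 : x < a)) (not_lt.2 (ha.2 (hs x hx).1)))
        rw [hse, Finset.prod_empty, ← hay, hG1]
      · rcases hdich y hy hay with ⟨δ, hδΛ, hδy, hδmax⟩ | hlim
        · have hrec : G y = (1 - p δ) * G δ := hGsucc δ hδΛ y hy hδy hδmax
          have hpδ := hp δ hδΛ (lt_of_lt_of_le hδy (hle_b y hy))
          have hsub : ∀ x ∈ s, x ≤ δ := fun x hx =>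
            (hδmax x (hs x hx).1).resolve_right (fun hc => absurd (hs x hx).2 (not_lt.2 hc))
          by_cases hδs : δ ∈ s
          · have hIH := IH δ (Or.inl hδΛ) hδy (s.erase δ) (fun x hx =>
              ⟨(hs x (Finset.mem_of_mem_erase hx)).1,
               lt_of_le_of_ne (hsub x (Finset.mem_of_mem_erase hx)) (Finset.ne_of_mem_erase hx)⟩)
            rw [hrec, ← Finset.mul_prod_erase s _ hδs]
            exact mul_le_mul_of_nonneg_left hIH (by linarith [hpδ.2])
          · have hIH := IH δ (Or.inl hδΛ) hδy s (fun x hx =>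
              ⟨(hs x hx).1, lt_of_le_of_ne (hsub x hx) (fun hc => hδs (hc ▸ hx))⟩)
            have hGδ0 := (hL1 δ (Or.inl hδΛ)).1
            rw [hrec]
            calc (1 - p δ) * G δ ≤ 1 * G δ :=
                  mul_le_mul_of_nonneg_right (by linarith [hpδ.1]) hGδ0
              _ = G δ := one_mul _
              _ ≤ _ := hIH
        · by_cases hse : s.Nonempty
          · have hms : s.max' hse ∈ s := s.max'_mem hse
            have hmΛ := (hs _ hms).1
            have hmy := (hs _ hms).2
            obtain ⟨α, hαΛ, hmα, hαy⟩ := hlim _ hmΛ hmy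
            have hIH := IH α (Or.inl hαΛ) hαy s
              (fun x hx => ⟨(hs x hx).1, lt_of_le_of_lt (Finset.le_max' s x hx) hmα⟩)
            exact le_trans ((hL1 y hy).2 α (Or.inl hαΛ) hαy.le) hIH
          · rw [Finset.not_nonempty_iff_eq_empty] at hse
            rw [hse, Finset.prod_empty]
            exact hGle1 y hy
    -- summability of the family
    set f : WithTop ℝ → ℝ := (Λ ∩ Iio b).indicator p with hf_def
    have hf0 : ∀ x, 0 ≤ f x :=
      fun x => Set.indicator_nonneg (fun y hy => (hp y hy.1 hy.2).1) x
    have hfsum : Summable f := by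
      refine summable_of_sum_le (c := -Real.log (G b)) (fun x => hf0 x) ?_
      intro u
      have h1 : ∑ x ∈ u, f x = ∑ x ∈ u.filter (fun x => x ∈ Λ ∩ Iio b), p x := by
        rw [Finset.sum_filter]
        refine Finset.sum_congr rfl fun x _ => ?_
        by_cases hx : x ∈ Λ ∩ Iio b <;> simp [hf_def, Set.indicator_apply, hx]
      have h2 := hM b hbU (u.filter (fun x => x ∈ Λ ∩ Iio b)) (fun x hx => by
        have := Finset.mem_filter.1 hx
        exact ⟨this.2.1, this.2.2⟩)
      have h3 : ∏ α ∈ u.filter (fun x => x ∈ Λ ∩ Iio b), (1 - p α)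
          ≤ Real.exp (-(∑ x ∈ u.filter (fun x => x ∈ Λ ∩ Iio b), p x)) := by
        rw [← Finset.sum_neg_distrib, Real.exp_sum]
        refine Finset.prod_le_prod (fun i hi => ?_) (fun i hi => ?_)
        · have hi' := Finset.mem_filter.1 hi
          linarith [(hp i hi'.2.1 hi'.2.2).2]
        · have := Real.add_one_le_exp (-p i)
          linarith
      have h4 : G b ≤ Real.exp (-(∑ x ∈ u.filter (fun x => x ∈ Λ ∩ Iio b), p x)) :=
        le_trans h2 h3
      have h5 := (Real.log_le_iff_le_exp hGbpos).2 h4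
      rw [h1]
      linarith
    refine ⟨fun γ => ∑' x, (Λ ∩ Iio γ).indicator f x, ?_, ?_, ?_⟩
    · -- sum over the empty initial segment
      have hempty : Λ ∩ Iio a = (∅ : Set (WithTop ℝ)) :=
        eq_empty_iff_forall_notMem.2 (fun x hx => absurd hx.2 (not_lt.2 (ha.2 hx.1)))
      simp only [hempty, Set.indicator_empty, Pi.zero_apply, tsum_zero]
    · -- successor recursion
      intro β hβ γ hγ hβγ hmax
      have hβb : β < b := lt_of_lt_of_le hβγ (hle_b γ hγ)
      have hset : Λ ∩ Iio γ = {β} ∪ (Λ ∩ Iio β) := by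
        ext x
        constructor
        · rintro ⟨hxΛ, hxγ⟩
          have h' : x ≤ β := (hmax x hxΛ).resolve_right (not_le.mpr hxγ)
          rcases eq_or_lt_of_le h' with he | hl
          · exact Or.inl he
          · exact Or.inr ⟨hxΛ, hl⟩
        · rintro (hx | ⟨hxΛ, hxβ⟩)
          · rw [Set.mem_singleton_iff] at hx; subst hx; exact ⟨hβ, hβγ⟩
          · exact ⟨hxΛ, lt_trans hxβ hβγ⟩
      have hdisj : Disjoint ({β} : Set (WithTop ℝ)) (Λ ∩ Iio β) :=
        Set.disjoint_singleton_left.2 (fun hc => lt_irrefl β hc.2)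
      show (∑' x, (Λ ∩ Iio γ).indicator f x) = p β + ∑' x, (Λ ∩ Iio β).indicator f x
      rw [hset, Set.indicator_union_of_disjoint hdisj]
      simp only [Pi.add_apply]
      rw [Summable.tsum_add (hfsum.indicator _) (hfsum.indicator _)]
      have hind : ({β} : Set (WithTop ℝ)).indicator f = fun x => if x = β then f β else 0 := by
        funext x
        by_cases hx : x = β
        · subst hx; simp
        · simp [Set.indicator_of_notMem, hx]
      rw [hind, tsum_ite_eq]
      have hfβ : f β = p β := Set.indicator_of_mem (Set.mem_inter hβ (Set.mem_Iio.2 hβb)) p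
      rw [hfβ]
    · -- limit condition
      intro γ hγ haγ hlim ε hε
      obtain ⟨u, hu⟩ := hfsum.vanishing (Metric.ball_mem_nhds (0 : ℝ) (half_pos hε))
      have hβ₀ : ∃ β₀ ∈ Λ, β₀ < γ ∧ ∀ x ∈ Λ, β₀ ≤ x → x < γ → x ∉ u := by
        by_cases hT : (u.filter (fun x => x ∈ Λ ∧ x < γ)).Nonempty
        · set T := u.filter (fun x => x ∈ Λ ∧ x < γ) with hTdef
          have hm := T.max'_mem hT
          have hmem := Finset.mem_filter.1 hm
          obtain ⟨β₀, hβ₀Λ, hmβ₀, hβ₀γ⟩ := hlim (T.max' hT) hmem.2.1 hmem.2.2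
          refine ⟨β₀, hβ₀Λ, hβ₀γ, fun x hxΛ hβ₀x hxγ hxu => ?_⟩
          have hxT : x ∈ T := Finset.mem_filter.2 ⟨hxu, hxΛ, hxγ⟩
          have := Finset.le_max' T x hxT
          exact absurd (lt_of_lt_of_le hmβ₀ hβ₀x) (not_lt.2 this)
        · exact ⟨a, ha.1, haγ, fun x hxΛ _ hxγ hxu =>
            hT ⟨x, Finset.mem_filter.2 ⟨hxu, hxΛ, hxγ⟩⟩⟩
      obtain ⟨β₀, hβ₀Λ, hβ₀γ, hcut⟩ := hβ₀
      refine ⟨β₀, hβ₀Λ, hβ₀γ, fun β hβΛ hβ₀β hβγ => ?_⟩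
      have hsplit : Λ ∩ Iio γ = (Λ ∩ Iio β) ∪ (Λ ∩ Ico β γ) := by
        ext x
        constructor
        · rintro ⟨hxΛ, hxγ⟩
          rcases lt_or_ge x β with h' | h'
          · exact Or.inl ⟨hxΛ, h'⟩
          · exact Or.inr ⟨hxΛ, h', hxγ⟩
        · rintro (⟨hxΛ, hxβ⟩ | ⟨hxΛ, _, hxγ⟩)
          · exact ⟨hxΛ, lt_trans hxβ hβγ⟩
          · exact ⟨hxΛ, hxγ⟩
      have hdisj : Disjoint (Λ ∩ Iio β) (Λ ∩ Ico β γ) := by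
        rw [Set.disjoint_left]
        rintro x ⟨_, hxβ⟩ ⟨_, hβx, _⟩
        exact absurd hβx (not_le.2 hxβ)
      have heq : (∑' x, (Λ ∩ Iio γ).indicator f x)
          = (∑' x, (Λ ∩ Iio β).indicator f x) + ∑' x, (Λ ∩ Ico β γ).indicator f x := by
        rw [hsplit, Set.indicator_union_of_disjoint hdisj]
        simp only [Pi.add_apply]
        exact Summable.tsum_add (hfsum.indicator _) (hfsum.indicator _)
      have ht0 : 0 ≤ ∑' x, (Λ ∩ Ico β γ).indicator f x :=
        tsum_nonneg (fun x => Set.indicator_nonneg (fun z _ => hf0 z) x)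
      have htle : (∑' x, (Λ ∩ Ico β γ).indicator f x) ≤ ε / 2 := by
        refine Summable.tsum_le_of_sum_le (hfsum.indicator _) ?_
        intro v
        have hveq : ∑ x ∈ v, (Λ ∩ Ico β γ).indicator f x
            = ∑ x ∈ v.filter (fun x => x ∈ Λ ∩ Ico β γ), f x := by
          rw [Finset.sum_filter]
          refine Finset.sum_congr rfl fun x _ => ?_
          by_cases hx : x ∈ Λ ∩ Ico β γ <;> simp [Set.indicator_apply, hx]
        have hdisj2 : Disjoint (v.filter (fun x => x ∈ Λ ∩ Ico β γ)) u := by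
          rw [Finset.disjoint_left]
          intro x hx hxu
          obtain ⟨-, hxΛ, hβx, hxγ⟩ := Finset.mem_filter.1 hx
          exact hcut x hxΛ (le_trans hβ₀β hβx) hxγ hxu
        have hball := hu _ hdisj2
        rw [Metric.mem_ball, Real.dist_eq, sub_zero] at hball
        rw [hveq]
        calc ∑ x ∈ v.filter (fun x => x ∈ Λ ∩ Ico β γ), f x
            ≤ |∑ x ∈ v.filter (fun x => x ∈ Λ ∩ Ico β γ), f x| := le_abs_self _
          _ ≤ ε / 2 := le_of_lt hball
      show ‖(∑' x, (Λ ∩ Iio β).indicator f x) - ∑' x, (Λ ∩ Iio γ).indicator f x‖ < ε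
      rw [Real.norm_eq_abs]
      have : (∑' x, (Λ ∩ Iio β).indicator f x) - (∑' x, (Λ ∩ Iio γ).indicator f x)
          = -(∑' x, (Λ ∩ Ico β γ).indicator f x) := by rw [heq]; ring
      rw [this, abs_neg, abs_of_nonneg ht0]
      linarith
end
end

section
/- Let (x_α)_{α∈Λ^{<b}} be an absolutely summable family in a unital Banach algebra E. Then (exp x_α)_{α∈Λ^{<b}} is multipliable and its product is invertible. -/
/-
The transfinite product is realised as an unordered limit: `G γ` is the limit, along the finite
subsets `t ⊆ Λ ∩ Iio γ` directed by inclusion, of the product of the `exp (x α)`, `α ∈ t`, taken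
in decreasing order of `α`. Since `‖exp y - 1‖ ≤ e^‖y‖ - 1`, enlarging `t` to `t'` moves this
ordered product by at most `e^(Σ_{t'} ‖x‖) - e^(Σ_t ‖x‖)`. By transfinite induction the partial
sums `F γ` are the suprema of the finite sums `Σ_t ‖x‖`, so the net is Cauchy, and the same
estimate gives the left continuity at limit elements. The products of the `exp (-x α)` in
increasing order converge in the same way, to an inverse of `G b`.
-/

open Set

noncomputable section

open Filter Topology

namespace NormedSpace

variable {E : Type*} [NormedRing E] [NormedAlgebra ℝ E] [CompleteSpace E]

theorem norm_exp_sub_one_le (y : E) : ‖exp y - 1‖ ≤ Real.exp ‖y‖ - 1 := by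
  have hE : HasSum (fun n : ℕ => ((n + 1).factorial⁻¹ : ℝ) • y ^ (n + 1)) (exp y - 1) := by
    simpa using (hasSum_nat_add_iff' 1).mpr (exp_series_hasSum_exp' (𝕂 := ℝ) y)
  have hR : HasSum (fun n : ℕ => ‖y‖ ^ (n + 1) / (n + 1).factorial) (Real.exp ‖y‖ - 1) := by
    rw [Real.exp_eq_exp_ℝ]
    simpa using (hasSum_nat_add_iff' 1).mpr (expSeries_div_hasSum_exp ‖y‖)
  refine hE.norm_le_of_bounded hR fun n => ?_
  rw [norm_smul, norm_inv, Real.norm_natCast, div_eq_inv_mul]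
  gcongr
  exact norm_pow_le' y n.succ_pos

def expUnit (x : E) : Eˣ where
  val := exp x
  inv := exp (-x)
  val_inv := by
    rw [← exp_add_of_commute_of_mem_ball (𝕂 := ℝ) (Commute.refl x).neg_right, add_neg_cancel,
      exp_zero] <;> simp [expSeries_radius_eq_top]
  inv_val := by
    rw [← exp_add_of_commute_of_mem_ball (𝕂 := ℝ) (Commute.refl x).neg_left, neg_add_cancel,
      exp_zero] <;> simp [expSeries_radius_eq_top]

end NormedSpace

section ListProd

variable {ι E : Type*} [NormedRing E] [NormOneClass E] {u : ι → E} {w : ι → ℝ}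

theorem List.norm_prod_map_le (hu : ∀ α, ‖u α - 1‖ ≤ Real.exp (w α) - 1) (l : List ι) :
    ‖(l.map u).prod‖ ≤ Real.exp (l.map w).sum := by
  induction l with
  | nil => simp
  | cons α l ih =>
    have hα : ‖u α‖ ≤ Real.exp (w α) := by
      simpa using (norm_le_norm_add_norm_sub' (u α) 1).trans (by linarith [hu α, norm_one (α := E)])
    simp only [List.map_cons, List.prod_cons, List.sum_cons, Real.exp_add]
    exact (norm_mul_le _ _).trans (mul_le_mul hα ih (norm_nonneg _) (Real.exp_pos _).le)

theorem List.Sublist.norm_prod_map_sub_le (hu : ∀ α, ‖u α - 1‖ ≤ Real.exp (w α) - 1)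
    {l₁ l₂ : List ι} (h : l₁.Sublist l₂) :
    ‖(l₂.map u).prod - (l₁.map u).prod‖ ≤ Real.exp (l₂.map w).sum - Real.exp (l₁.map w).sum := by
  induction h with
  | slnil => simp
  | @cons l₁ l₂ α _ ih =>
    simp only [List.map_cons, List.prod_cons, List.sum_cons, Real.exp_add]
    have hfactor : ‖(u α - 1) * (l₂.map u).prod‖ ≤ (Real.exp (w α) - 1) * Real.exp (l₂.map w).sum :=
      (norm_mul_le _ _).trans (mul_le_mul (hu α) (List.norm_prod_map_le hu l₂) (norm_nonneg _)
        ((norm_nonneg _).trans (hu α)))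
    calc ‖u α * (l₂.map u).prod - (l₁.map u).prod‖
        ≤ ‖(u α - 1) * (l₂.map u).prod‖ + ‖(l₂.map u).prod - (l₁.map u).prod‖ := by
          rw [sub_one_mul]; exact norm_sub_le_norm_sub_add_norm_sub _ _ _
      _ ≤ _ := by linarith
  | @cons_cons l₁ l₂ α _ ih =>
    simp only [List.map_cons, List.prod_cons, List.sum_cons, Real.exp_add, ← mul_sub]
    have hα : ‖u α‖ ≤ Real.exp (w α) := by simpa using List.norm_prod_map_le hu [α]
    exact (norm_mul_le _ _).trans (mul_le_mul hα ih (norm_nonneg _) (Real.exp_pos _).le)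

end ListProd

namespace Finset

variable {ι : Type*}

section SortRel

variable (r : ι → ι → Prop) [DecidableRel r] [IsTrans ι r] [Std.Antisymm r] [Std.Total r]

theorem sort_sublist_sort {s t : Finset ι} (h : s ⊆ t) : (s.sort r).Sublist (t.sort r) :=
  List.sublist_of_subperm_of_pairwise
    ((sort_nodup s r).subperm fun α hα => by simpa using h (by simpa using hα))
    (pairwise_sort s r) (pairwise_sort t r)

theorem sum_map_sort {M : Type*} [AddCommMonoid M] (s : Finset ι) (w : ι → M) :
    ((s.sort r).map w).sum = ∑ α ∈ s, w α := by
  rw [((sort_perm_toList s r).map w).sum_eq, sum_map_toList]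

end SortRel

theorem sort_ge_eq_reverse [LinearOrder ι] (s : Finset ι) :
    s.sort (· ≥ ·) = (s.sort (· ≤ ·)).reverse :=
  List.Perm.eq_of_pairwise' (pairwise_sort s _) (List.pairwise_reverse.mpr (pairwise_sort s _))
    ((sort_perm_toList s _).trans ((sort_perm_toList s _).symm.trans (List.reverse_perm _).symm))

end Finset

section OrderedProd

variable {ι M : Type*}

section Rel

variable (r : ι → ι → Prop) [DecidableRel r] [IsTrans ι r] [Std.Antisymm r] [Std.Total r]

/-- For `r = (· ≥ ·)` the factor of largest index stands leftmost, as in the recursion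
`G (S β) = x β * G β` of `WOProdData`. -/
def orderedProd [Monoid M] (u : ι → M) (s : Finset ι) : M := ((s.sort r).map u).prod

variable {r}

@[simp]
theorem orderedProd_empty [Monoid M] (u : ι → M) : orderedProd r u ∅ = 1 := by
  simp [orderedProd]

theorem map_orderedProd [Monoid M] {N : Type*} [Monoid N] (f : M →* N) (u : ι → M)
    (s : Finset ι) : f (orderedProd r u s) = orderedProd r (fun α => f (u α)) s := by
  simp [orderedProd, map_list_prod, Function.comp_def]

theorem norm_orderedProd_sub_le [NormedRing M] [NormOneClass M] {u : ι → M} {w : ι → ℝ}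
    (hu : ∀ α, ‖u α - 1‖ ≤ Real.exp (w α) - 1) {s t : Finset ι} (h : s ⊆ t) :
    ‖orderedProd r u t - orderedProd r u s‖ ≤
      Real.exp (∑ α ∈ t, w α) - Real.exp (∑ α ∈ s, w α) := by
  simpa only [orderedProd, Finset.sum_map_sort] using
    (Finset.sort_sublist_sort r h).norm_prod_map_sub_le hu

end Rel

variable [LinearOrder ι]

theorem orderedProd_insert_of_forall_lt [Monoid M] (u : ι → M) {β : ι} {s : Finset ι}
    (h : ∀ α ∈ s, α < β) : orderedProd (· ≥ ·) u (insert β s) = u β * orderedProd (· ≥ ·) u s := by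
  rw [orderedProd, orderedProd, Finset.sort_insert _ (fun α hα => (h α hα).le)
    (fun hβ => lt_irrefl β (h β hβ)), List.map_cons, List.prod_cons]

theorem orderedProd_inv [Group M] (u : ι → M) (s : Finset ι) :
    (orderedProd (· ≥ ·) u s)⁻¹ = orderedProd (· ≤ ·) (fun α => (u α)⁻¹) s := by
  rw [orderedProd, orderedProd, List.prod_inv_reverse, Finset.sort_ge_eq_reverse, List.map_reverse,
    List.map_reverse, List.reverse_reverse, List.map_map]
  rfl

end OrderedProd

section FinsetsAtTop

variable {ι : Type*} {A : Set ι}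

def finsetsAtTop (A : Set ι) : Filter (Finset ι) :=
  ⨅ t : {t : Finset ι // ↑t ⊆ A}, 𝓟 {s | t.1 ⊆ s ∧ ↑s ⊆ A}

theorem hasBasis_finsetsAtTop :
    (finsetsAtTop A).HasBasis (fun t : Finset ι => ↑t ⊆ A) fun t => {s | t ⊆ s ∧ ↑s ⊆ A} := by
  classical
  have : Nonempty {t : Finset ι // ↑t ⊆ A} := ⟨⟨∅, by simp⟩⟩
  have hdir : Directed (· ≥ ·) fun t : {t : Finset ι // ↑t ⊆ A} => {s | t.1 ⊆ s ∧ ↑s ⊆ A} :=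
    fun t₁ t₂ => ⟨⟨t₁.1 ∪ t₂.1, by simpa using ⟨t₁.2, t₂.2⟩⟩,
      fun s hs => ⟨Finset.subset_union_left.trans hs.1, hs.2⟩,
      fun s hs => ⟨Finset.subset_union_right.trans hs.1, hs.2⟩⟩
  exact (hasBasis_iInf_principal hdir).to_hasBasis (fun t _ => ⟨t.1, t.2, subset_rfl⟩)
    fun t ht => ⟨⟨t, ht⟩, trivial, subset_rfl⟩

instance : NeBot (finsetsAtTop A) :=
  hasBasis_finsetsAtTop.neBot_iff.2 fun ht => ⟨_, subset_rfl, ht⟩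

theorem eventually_subset_finsetsAtTop : ∀ᶠ s in finsetsAtTop A, ↑s ⊆ A :=
  mem_of_superset (hasBasis_finsetsAtTop.mem_of_mem (i := ∅) (by simp)) fun _ hs => hs.2

theorem tendsto_insert_finsetsAtTop [DecidableEq ι] (a : ι) :
    Tendsto (insert a) (finsetsAtTop A) (finsetsAtTop (insert a A)) := by
  refine (hasBasis_finsetsAtTop.tendsto_iff hasBasis_finsetsAtTop).2 fun t ht =>
    ⟨t.erase a, fun α hα => ?_, fun s hs => ⟨?_, ?_⟩⟩
  · simp only [Finset.coe_erase, Set.mem_sdiff] at hα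
    exact (ht hα.1).resolve_left hα.2
  · exact Finset.subset_insert_iff.2 hs.1
  · rw [Finset.coe_insert]; exact insert_subset_insert hs.2

variable {E : Type*} [NormedAddCommGroup E] [CompleteSpace E]

theorem tendsto_limUnder_of_norm_sub_le {P : Finset ι → E} {g : Finset ι → ℝ} {c : ℝ}
    (hP : ∀ s t, s ⊆ t → ‖P t - P s‖ ≤ g t - g s) (hg : IsLUB (g '' {t | ↑t ⊆ A}) c) :
    Tendsto P (finsetsAtTop A) (𝓝 (limUnder (finsetsAtTop A) P)) ∧
      ∀ t, ↑t ⊆ A → ‖limUnder (finsetsAtTop A) P - P t‖ ≤ c - g t := by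
  have hgc : ∀ s, ↑s ⊆ A → g s ≤ c := fun s hs => hg.1 ⟨s, hs, rfl⟩
  have hcauchy : Cauchy (map P (finsetsAtTop A)) := by
    refine Metric.cauchy_iff.2 ⟨map_neBot, fun ε hε => ?_⟩
    obtain ⟨_, ⟨t₀, ht₀, rfl⟩, hlt, -⟩ := hg.exists_between (sub_lt_self c (half_pos hε))
    refine ⟨P '' {s | t₀ ⊆ s ∧ ↑s ⊆ A}, image_mem_map (hasBasis_finsetsAtTop.mem_of_mem ht₀), ?_⟩
    rintro _ ⟨s₁, hs₁, rfl⟩ _ ⟨s₂, hs₂, rfl⟩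
    calc dist (P s₁) (P s₂) ≤ ‖P s₁ - P t₀‖ + ‖P s₂ - P t₀‖ := by
          simpa only [dist_eq_norm] using dist_triangle_right (P s₁) (P s₂) (P t₀)
      _ ≤ (g s₁ - g t₀) + (g s₂ - g t₀) := add_le_add (hP _ _ hs₁.1) (hP _ _ hs₂.1)
      _ < ε := by linarith [hgc s₁ hs₁.2, hgc s₂ hs₂.2]
  obtain ⟨L, hL⟩ := cauchy_map_iff_exists_tendsto.1 hcauchy
  rw [hL.limUnder_eq]
  refine ⟨hL, fun t ht => le_of_tendsto (hL.sub_const (P t)).norm ?_⟩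
  filter_upwards [hasBasis_finsetsAtTop.mem_of_mem ht] with s hs
  linarith [hP t s hs.1, hgc s hs.2]

end FinsetsAtTop

section WellOrdered

variable {ι : Type*} [LinearOrder ι] {Λ : Set ι} {β γ : ι}

theorem inter_Iio_eq_insert (hβ : β ∈ Λ) (hβγ : β < γ) (hgap : ∀ α ∈ Λ, α ≤ β ∨ γ ≤ α) :
    Λ ∩ Iio γ = insert β (Λ ∩ Iio β) := by
  ext α
  simp only [mem_inter_iff, mem_Iio, mem_insert_iff]
  constructor
  · rintro ⟨hα, hαγ⟩
    rcases (hgap α hα).resolve_right (not_le.2 hαγ) |>.eq_or_lt with rfl | hαβ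
    exacts [Or.inl rfl, Or.inr ⟨hα, hαβ⟩]
  · rintro (rfl | ⟨hα, hαβ⟩)
    exacts [⟨hβ, hβγ⟩, ⟨hα, hαβ.trans hβγ⟩]

theorem exists_finset_subset_inter_Iio (hlim : ∀ β ∈ Λ, β < γ → ∃ α ∈ Λ, β < α ∧ α < γ)
    (hβ : β ∈ Λ) (hβγ : β < γ) {t : Finset ι} (ht : ↑t ⊆ Λ ∩ Iio γ) :
    ∃ β' ∈ Λ, β < β' ∧ β' < γ ∧ ↑t ⊆ Λ ∩ Iio β' := by
  obtain ⟨m, hm, hmax⟩ := (insert β t).exists_max_image id (Finset.insert_nonempty β t)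
  have hmγ : m ∈ Λ ∧ m < γ := by
    rcases Finset.mem_insert.1 hm with rfl | h
    exacts [⟨hβ, hβγ⟩, ht h]
  obtain ⟨β', hβ', hmβ', hβ'γ⟩ := hlim m hmγ.1 hmγ.2
  exact ⟨β', hβ', (hmax β (Finset.mem_insert_self β t)).trans_lt hmβ', hβ'γ,
    fun α hα => ⟨(ht hα).1, (hmax α (Finset.mem_insert_of_mem hα)).trans_lt hmβ'⟩⟩

end WellOrdered

section FinsetSums

variable {ι : Type*} {w : ι → ℝ} {A B : Set ι} {S : ℝ}

/-- For nonnegative `w`, `IsLUB (finsetSums w A) S` says that `w` is summable over `A` with sum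
`S`. -/
def finsetSums (w : ι → ℝ) (A : Set ι) : Set ℝ := (fun t => ∑ α ∈ t, w α) '' {t | ↑t ⊆ A}

theorem finsetSums_mono (h : A ⊆ B) : finsetSums w A ⊆ finsetSums w B :=
  image_mono fun _ ht => ht.trans h

@[simp]
theorem finsetSums_empty : finsetSums w ∅ = {0} := by
  simp [finsetSums, Set.subset_empty_iff]

theorem IsLUB.finsetSums_insert [DecidableEq ι] {β : ι} (h : IsLUB (finsetSums w A) S)
    (hβ : β ∉ A) (hwβ : 0 ≤ w β) : IsLUB (finsetSums w (insert β A)) (w β + S) := by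
  refine ⟨?_, fun c hc => ?_⟩
  · rintro _ ⟨t, ht, rfl⟩
    have hle := h.1 ⟨t.erase β, by simpa using ht, rfl⟩
    dsimp only at hle ⊢
    by_cases hβt : β ∈ t
    · rw [← Finset.add_sum_erase t w hβt]; linarith
    · rw [Finset.erase_eq_of_notMem hβt] at hle; linarith
  · suffices S ≤ c - w β by linarith
    refine h.2 ?_
    rintro _ ⟨t, ht, rfl⟩
    have hβt : β ∉ t := fun hβ' => hβ (ht hβ')
    have := hc ⟨insert β t, by simpa using insert_subset_insert ht, rfl⟩
    dsimp only at this ⊢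
    rw [Finset.sum_insert hβt] at this
    linarith

theorem IsLUB.exp_finsetSums (h : IsLUB (finsetSums w A) S) :
    IsLUB ((fun t => Real.exp (∑ α ∈ t, w α)) '' {t | ↑t ⊆ A}) (Real.exp S) := by
  rw [← image_image Real.exp]
  exact h.isLUB_of_tendsto (Real.exp_monotone.monotoneOn _) ⟨0, ∅, by simp, by simp⟩
    (Real.continuous_exp.tendsto S |>.mono_left nhdsWithin_le_nhds)

variable [LinearOrder ι] {Λ : Set ι} {γ : ι}

theorem isLUB_finsetSums_of_limit {F : ι → ℝ}
    (hlim : ∀ β ∈ Λ, β < γ → ∃ α ∈ Λ, β < α ∧ α < γ)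
    (ih : ∀ β ∈ Λ, β < γ → IsLUB (finsetSums w (Λ ∩ Iio β)) (F β))
    (hF : ∀ ε > 0, ∃ β₀ ∈ Λ, β₀ < γ ∧ ∀ β ∈ Λ, β₀ ≤ β → β < γ → ‖F β - F γ‖ < ε) :
    IsLUB (finsetSums w (Λ ∩ Iio γ)) (F γ) := by
  refine ⟨?_, fun c hc => le_of_forall_pos_lt_add fun ε hε => ?_⟩
  · rintro _ ⟨t, ht, rfl⟩
    refine le_of_forall_pos_lt_add fun ε hε => ?_
    obtain ⟨β₀, hβ₀, hβ₀γ, hclose⟩ := hF ε hε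
    obtain ⟨β, hβ, hβ₀β, hβγ, htβ⟩ := exists_finset_subset_inter_Iio hlim hβ₀ hβ₀γ ht
    have h1 := (ih β hβ hβγ).1 ⟨t, htβ, rfl⟩
    have h2 := abs_sub_lt_iff.1 (hclose β hβ hβ₀β.le hβγ)
    linarith
  · obtain ⟨β₀, hβ₀, hβ₀γ, hclose⟩ := hF ε hε
    have h1 : F β₀ ≤ c := (ih β₀ hβ₀ hβ₀γ).2 fun y hy =>
      hc (finsetSums_mono (inter_subset_inter_right _ (Iio_subset_Iio hβ₀γ.le)) hy)
    have h2 := abs_sub_lt_iff.1 (hclose β₀ hβ₀ le_rfl hβ₀γ)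
    linarith

theorem isLUB_finsetSums_of_woSumData {a b : ι} {F : ι → ℝ} (hWF : Λ.IsWF) (ha : IsLeast Λ a)
    (hb : IsLUB Λ b) (hw : ∀ α, 0 ≤ w α) (hF : WOSumData Λ a b w F) :
    ∀ γ ∈ Λ ∪ {b}, IsLUB (finsetSums w (Λ ∩ Iio γ)) (F γ) := by
  obtain ⟨hF₀, hFsucc, hFlim⟩ := hF
  intro γ hγ
  refine Set.WellFoundedOn.induction (P := fun γ => IsLUB (finsetSums w (Λ ∩ Iio γ)) (F γ))
    (hWF.union isWF_singleton) hγ fun γ hγ ih => ?_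
  have haγ : a ≤ γ := hγ.elim (fun h => ha.2 h) fun h => (eq_of_mem_singleton h) ▸ hb.1 ha.1
  rcases haγ.eq_or_lt with rfl | haγ
  · have : Λ ∩ Iio a = ∅ := eq_empty_of_forall_notMem fun α hα => not_lt.2 (ha.2 hα.1) hα.2
    rw [this, finsetSums_empty, hF₀]
    exact isLUB_singleton
  by_cases hsucc : ∃ β ∈ Λ, β < γ ∧ ∀ α ∈ Λ, α ≤ β ∨ γ ≤ α
  · obtain ⟨β, hβ, hβγ, hgap⟩ := hsucc
    rw [inter_Iio_eq_insert hβ hβγ hgap, hFsucc β hβ γ hγ hβγ hgap]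
    exact (ih β (Or.inl hβ) hβγ).finsetSums_insert (fun h => lt_irrefl β h.2) (hw β)
  · push Not at hsucc
    exact isLUB_finsetSums_of_limit hsucc (fun β hβ hβγ => ih β (Or.inl hβ) hβγ)
      (hFlim γ hγ haγ hsucc)

end FinsetSums

theorem isUnit_of_tendsto_units {α M : Type*} [Monoid M] [TopologicalSpace M] [ContinuousMul M]
    [T2Space M] {l : Filter α} [l.NeBot] {f : α → Mˣ} {x y : M}
    (hx : Tendsto (fun i => (f i : M)) l (𝓝 x)) (hy : Tendsto (fun i => (↑(f i)⁻¹ : M)) l (𝓝 y)) :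
    IsUnit x :=
  ⟨⟨x, y, tendsto_nhds_unique (hx.mul hy) (by simp), tendsto_nhds_unique (hy.mul hx) (by simp)⟩,
    rfl⟩

section TransfiniteProduct

variable {ι : Type*} [LinearOrder ι] {E : Type*} [NormedRing E] [CompleteSpace E]

theorem woProdData_limUnder {Λ : Set ι} {a b : ι} {P : Finset ι → E} {u : ι → E}
    {g : Finset ι → ℝ} {c : ι → ℝ} (ha : IsLeast Λ a) (hP₀ : P ∅ = 1)
    (hP_insert : ∀ β s, (∀ α ∈ s, α < β) → P (insert β s) = u β * P s)
    (hP : ∀ s t, s ⊆ t → ‖P t - P s‖ ≤ g t - g s)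
    (hc : ∀ γ ∈ Λ ∪ {b}, IsLUB (g '' {t | ↑t ⊆ Λ ∩ Iio γ}) (c γ)) :
    WOProdData Λ a b u fun γ => limUnder (finsetsAtTop (Λ ∩ Iio γ)) P := by
  have hG γ (hγ : γ ∈ Λ ∪ {b}) := tendsto_limUnder_of_norm_sub_le hP (hc γ hγ)
  refine ⟨?_, fun β hβ γ hγ hβγ hgap => ?_, fun γ hγ haγ hlim ε hε => ?_⟩
  · have hempty : Λ ∩ Iio a = ∅ :=
      eq_empty_of_forall_notMem fun α hα => not_lt.2 (ha.2 hα.1) hα.2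
    refine tendsto_nhds_unique (hG a (Or.inl ha.1)).1 (tendsto_const_nhds.congr' ?_)
    filter_upwards [eventually_subset_finsetsAtTop] with s hs
    rw [hempty, subset_empty_iff, Finset.coe_eq_empty] at hs
    rw [hs, hP₀]
  · have hins := tendsto_insert_finsetsAtTop β (A := Λ ∩ Iio β)
    rw [← inter_Iio_eq_insert hβ hβγ hgap] at hins
    refine tendsto_nhds_unique ((hG γ hγ).1.comp hins)
      (((hG β (Or.inl hβ)).1.const_mul (u β)).congr' ?_)
    filter_upwards [eventually_subset_finsetsAtTop] with s hs
    exact (hP_insert β s fun α hα => (hs hα).2).symm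
  · obtain ⟨_, ⟨t, ht, rfl⟩, hct, -⟩ :=
      (hc γ hγ).exists_between (sub_lt_self (c γ) (half_pos hε))
    obtain ⟨β₀, hβ₀, -, hβ₀γ, htβ₀⟩ := exists_finset_subset_inter_Iio hlim ha.1 haγ ht
    refine ⟨β₀, hβ₀, hβ₀γ, fun β hβ hβ₀β hβγ => ?_⟩
    have htβ : ↑t ⊆ Λ ∩ Iio β := htβ₀.trans (inter_subset_inter_right _ (Iio_subset_Iio hβ₀β))
    have hcβ : c β ≤ c γ := (hc β (Or.inl hβ)).mono (hc γ hγ)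
      (image_mono fun s hs => hs.trans (inter_subset_inter_right _ (Iio_subset_Iio hβγ.le)))
    calc ‖_ - _‖ ≤ ‖_ - P t‖ + ‖_ - P t‖ := by
          simpa only [dist_eq_norm] using dist_triangle_right _ _ (P t)
      _ ≤ (c β - g t) + (c γ - g t) :=
          add_le_add ((hG β (Or.inl hβ)).2 t htβ) ((hG γ hγ).2 t ht)
      _ < ε := by linarith

theorem isUnit_limUnder_orderedProd [NormOneClass E] {A : Set ι} {U : ι → Eˣ} {w : ι → ℝ} {S : ℝ}
    (hU : ∀ α, ‖(U α : E) - 1‖ ≤ Real.exp (w α) - 1)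
    (hU' : ∀ α, ‖(↑(U α)⁻¹ : E) - 1‖ ≤ Real.exp (w α) - 1)
    (hS : IsLUB (finsetSums w A) S) :
    IsUnit (limUnder (finsetsAtTop A) (orderedProd (· ≥ ·) fun α => (U α : E))) := by
  have hP := tendsto_limUnder_of_norm_sub_le
    (fun _ _ h => norm_orderedProd_sub_le (r := (· ≥ · : ι → ι → Prop)) hU h) hS.exp_finsetSums
  have hQ := tendsto_limUnder_of_norm_sub_le
    (fun _ _ h => norm_orderedProd_sub_le (r := (· ≤ · : ι → ι → Prop)) hU' h) hS.exp_finsetSums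
  refine isUnit_of_tendsto_units (f := orderedProd (· ≥ ·) U) (hP.1.congr fun s => ?_)
    (hQ.1.congr fun s => ?_)
  · rw [← Units.coeHom_apply, map_orderedProd]
    rfl
  · rw [orderedProd_inv, ← Units.coeHom_apply, map_orderedProd]
    rfl

end TransfiniteProduct

/-- If a family in a unital Banach algebra is absolutely summable, then the family
of its exponentials is multipliable and the product is invertible. -/
theorem stmt11 {E : Type*} [NormedRing E] [NormedAlgebra ℝ E] [CompleteSpace E] [NormOneClass E]
    {Λ : Set (WithTop ℝ)} {a b : WithTop ℝ} (hWF : Λ.IsWF)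
    (ha : IsLeast Λ a) (hb : IsLUB Λ b)
    (x : WithTop ℝ → E)
    (habs : ∃ F : WithTop ℝ → ℝ, WOSumData Λ a b (fun α => ‖x α‖) F) :
    ∃ G : WithTop ℝ → E,
      WOProdData Λ a b (fun α => NormedSpace.exp (x α)) G ∧ IsUnit (G b) := by
  obtain ⟨F, hF⟩ := habs
  have hS := isLUB_finsetSums_of_woSumData hWF ha hb (fun α => norm_nonneg (x α)) hF
  have hexp : ∀ α, ‖NormedSpace.exp (x α) - 1‖ ≤ Real.exp ‖x α‖ - 1 :=
    fun α => NormedSpace.norm_exp_sub_one_le (x α)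
  have hexp_neg : ∀ α, ‖NormedSpace.exp (-x α) - 1‖ ≤ Real.exp ‖x α‖ - 1 := fun α => by
    simpa only [norm_neg] using NormedSpace.norm_exp_sub_one_le (-x α)
  refine ⟨_, woProdData_limUnder ha (orderedProd_empty _)
    (fun β s h => orderedProd_insert_of_forall_lt _ h)
    (fun s t h => norm_orderedProd_sub_le hexp h) fun γ hγ => (hS γ hγ).exp_finsetSums,
    isUnit_limUnder_orderedProd (U := fun α => NormedSpace.expUnit (x α)) hexp hexp_neg
      (hS b (Or.inr rfl))⟩
end
end

section
/- If V : [a,b] × I → E is strongly Kurzweil product integrable (with associated function W), then V is Kurzweil product integrable and the two product integrals coincide; i.e., for every ε > 0 there is a gauge δ such that ‖P(V,D) − W(b)W(a)⁻¹‖ < ε for all δ-fine tagged partitions D of [a,b]. -/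
open Set

noncomputable section

/-- A gauge on `[a,b]`: a function positive on `[a,b]`. -/
def IsGauge (a b : ℝ) (δ : ℝ → ℝ) : Prop := ∀ s ∈ Set.Icc a b, 0 < δ s

/-- `(m, t, ξ)` encodes a tagged partition `a = t 0 < t 1 < ⋯ < t m = b` with tags
`ξ i ∈ [t i, t (i+1)]` for `i < m`. -/
def IsTaggedPartition (a b : ℝ) (m : ℕ) (t ξ : ℕ → ℝ) : Prop :=
  t 0 = a ∧ t m = b ∧ (∀ i < m, t i < t (i + 1)) ∧
    ∀ i < m, ξ i ∈ Set.Icc (t i) (t (i + 1))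

/-- A tagged partition is `δ`-fine if each `[t i, t (i+1)] ⊆ (ξ i - δ (ξ i), ξ i + δ (ξ i))`. -/
def IsFinePartition (δ : ℝ → ℝ) (m : ℕ) (t ξ : ℕ → ℝ) : Prop :=
  ∀ i < m, ξ i - δ (ξ i) < t i ∧ t (i + 1) < ξ i + δ (ξ i)

/-- The right-to-left product `V(ξ_{k-1},[t_{k-1},t_k]) ⋯ V(ξ_0,[t_0,t_1])` associated with a
point-interval function `V` (where `V ξ x y` stands for `V(ξ,[x,y])`). -/
def partProd {E : Type*} [NormedRing E] (V : ℝ → ℝ → ℝ → E) (t ξ : ℕ → ℝ) : ℕ → E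
  | 0 => 1
  | k + 1 => V (ξ k) (t k) (t (k + 1)) * partProd V t ξ k

/-- `V` is strongly Kurzweil product integrable with integral `P`:  there is `W` with
invertible values, `W` and `W⁻¹` bounded, `P = W(b) W(a)⁻¹`, and the Riemann-type sums of
`‖V(ξᵢ,[tᵢ₋₁,tᵢ]) − W(tᵢ)W(tᵢ₋₁)⁻¹‖` can be made arbitrarily small on δ-fine tagged
partitions. -/
def StrongKurzweilProdIntegrable {E : Type*} [NormedRing E]
    (a b : ℝ) (V : ℝ → ℝ → ℝ → E) (P : E) : Prop :=
  ∃ W Winv : ℝ → E,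
    (∀ s ∈ Set.Icc a b, W s * Winv s = 1 ∧ Winv s * W s = 1) ∧
    (∃ M : ℝ, ∀ s ∈ Set.Icc a b, ‖W s‖ ≤ M ∧ ‖Winv s‖ ≤ M) ∧
    P = W b * Winv a ∧
    ∀ ε > 0, ∃ δ : ℝ → ℝ, IsGauge a b δ ∧
      ∀ m t ξ, IsTaggedPartition a b m t ξ → IsFinePartition δ m t ξ →
        ∑ i ∈ Finset.range m,
          ‖V (ξ i) (t i) (t (i + 1)) - W (t (i + 1)) * Winv (t i)‖ < ε

/-- `V` is Kurzweil product integrable with (invertible) integral `P`. -/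
def KurzweilProdIntegrable {E : Type*} [NormedRing E]
    (a b : ℝ) (V : ℝ → ℝ → ℝ → E) (P : E) : Prop :=
  IsUnit P ∧
    ∀ ε > 0, ∃ δ : ℝ → ℝ, IsGauge a b δ ∧
      ∀ m t ξ, IsTaggedPartition a b m t ξ → IsFinePartition δ m t ξ →
        ‖partProd V t ξ m - P‖ < ε

/-- `V` is Riemann product integrable with (invertible) integral `P`: as Kurzweil
product integrability, but with constant gauges. -/
def RiemannProdIntegrable {E : Type*} [NormedRing E]
    (a b : ℝ) (V : ℝ → ℝ → ℝ → E) (P : E) : Prop :=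
  IsUnit P ∧
    ∀ ε > 0, ∃ δ : ℝ, 0 < δ ∧
      ∀ m t ξ, IsTaggedPartition a b m t ξ → IsFinePartition (fun _ => δ) m t ξ →
        ‖partProd V t ξ m - P‖ < ε

/-- Auxiliary right-to-left ordered product of `1 + g i`. -/
def qprod {E : Type*} [NormedRing E] (g : ℕ → E) : ℕ → E
  | 0 => 1
  | k + 1 => (1 + g k) * qprod g k

lemma qprod_bound {E : Type*} [NormedRing E] [NormOneClass E] (g : ℕ → E)
    (m : ℕ) (h1 : ∑ i ∈ Finset.range m, ‖g i‖ ≤ 1) :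
    ‖qprod g m - 1‖ ≤ (∑ i ∈ Finset.range m, ‖g i‖) +
      (∑ i ∈ Finset.range m, ‖g i‖) ^ 2 := by
  induction m with
  | zero => simp [qprod]
  | succ k ih =>
    have hsub : ∑ i ∈ Finset.range k, ‖g i‖ ≤ ∑ i ∈ Finset.range (k + 1), ‖g i‖ :=
      Finset.sum_le_sum_of_subset_of_nonneg (Finset.range_subset_range.2 (Nat.le_succ k))
        (fun i _ _ => norm_nonneg _)
    have ihk := ih (hsub.trans h1)
    set S : ℝ := ∑ i ∈ Finset.range k, ‖g i‖ with hS
    have hSnn : 0 ≤ S := Finset.sum_nonneg fun i _ => norm_nonneg _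
    have hS1 : S ≤ 1 := hsub.trans h1
    have hdnn : 0 ≤ ‖g k‖ := norm_nonneg _
    have hQ : ‖qprod g k‖ ≤ 1 + S + S ^ 2 := by
      calc ‖qprod g k‖ = ‖(qprod g k - 1) + 1‖ := by rw [sub_add_cancel]
        _ ≤ ‖qprod g k - 1‖ + ‖(1 : E)‖ := norm_add_le _ _
        _ ≤ (S + S ^ 2) + 1 := by rw [norm_one]; linarith
        _ = 1 + S + S ^ 2 := by ring
    have hexp : qprod g (k + 1) - 1 = (qprod g k - 1) + g k * qprod g k := by
      show (1 + g k) * qprod g k - 1 = _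
      noncomm_ring
    rw [Finset.sum_range_succ, ← hS, hexp]
    calc ‖(qprod g k - 1) + g k * qprod g k‖
        ≤ ‖qprod g k - 1‖ + ‖g k * qprod g k‖ := norm_add_le _ _
      _ ≤ (S + S ^ 2) + ‖g k‖ * ‖qprod g k‖ := by
          gcongr
          exact norm_mul_le _ _
      _ ≤ (S + S ^ 2) + ‖g k‖ * (1 + S + S ^ 2) := by
          gcongr
      _ ≤ (S + ‖g k‖) + (S + ‖g k‖) ^ 2 := by
          nlinarith [sq_nonneg (‖g k‖), mul_nonneg hdnn (mul_nonneg hSnn (sub_nonneg.2 hS1)),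
            mul_nonneg hdnn hSnn]

/-- Strong Kurzweil product integrability implies Kurzweil product integrability, with
the same value W(b)W(a)⁻¹ of the product integral. -/
theorem stmt12 {E : Type*} [NormedRing E] [NormOneClass E] [CompleteSpace E]
    (a b : ℝ) (hab : a < b) (V : ℝ → ℝ → ℝ → E) (W Winv : ℝ → E)
    (hinv : ∀ s ∈ Set.Icc a b, W s * Winv s = 1 ∧ Winv s * W s = 1)
    (hbd : ∃ M : ℝ, ∀ s ∈ Set.Icc a b, ‖W s‖ ≤ M ∧ ‖Winv s‖ ≤ M)
    (hstrong : ∀ ε > 0, ∃ δ : ℝ → ℝ, IsGauge a b δ ∧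
      ∀ m t ξ, IsTaggedPartition a b m t ξ → IsFinePartition δ m t ξ →
        ∑ i ∈ Finset.range m,
          ‖V (ξ i) (t i) (t (i + 1)) - W (t (i + 1)) * Winv (t i)‖ < ε) :
    KurzweilProdIntegrable a b V (W b * Winv a) := by
  obtain ⟨M0, hM0⟩ := hbd
  set M : ℝ := max M0 1 with hMdef
  have hM1 : (1 : ℝ) ≤ M := le_max_right _ _
  have hMpos : (0 : ℝ) < M := lt_of_lt_of_le one_pos hM1
  have hbd' : ∀ s ∈ Set.Icc a b, ‖W s‖ ≤ M ∧ ‖Winv s‖ ≤ M := fun s hs =>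
    ⟨(hM0 s hs).1.trans (le_max_left _ _), (hM0 s hs).2.trans (le_max_left _ _)⟩
  have ha : a ∈ Set.Icc a b := ⟨le_refl a, hab.le⟩
  have hb : b ∈ Set.Icc a b := ⟨hab.le, le_refl b⟩
  constructor
  · refine ⟨⟨W b * Winv a, W a * Winv b, ?_, ?_⟩, rfl⟩
    · rw [mul_assoc, ← mul_assoc (Winv a), (hinv a ha).2, one_mul, (hinv b hb).1]
    · rw [mul_assoc, ← mul_assoc (Winv b), (hinv b hb).2, one_mul, (hinv a ha).1]
  · intro ε hε
    set ε0 : ℝ := min (1 / M ^ 2) (ε / (2 * M ^ 4)) with hε0def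
    have hε0 : 0 < ε0 := lt_min (by positivity) (by positivity)
    obtain ⟨δ, hδg, hδ⟩ := hstrong ε0 hε0
    refine ⟨δ, hδg, ?_⟩
    intro m t ξ hpart hfine
    have hsum := hδ m t ξ hpart hfine
    obtain ⟨ht0, htm, hlt, hξ⟩ := hpart
    have hstep : ∀ k i, i + k ≤ m → t i ≤ t (i + k) := by
      intro k
      induction k with
      | zero => intro i _; simp
      | succ k ih =>
        intro i h
        have h1 : t i ≤ t (i + k) := ih i (by omega)
        have h2 : t (i + k) < t (i + k + 1) := hlt (i + k) (by omega)
        have : i + (k + 1) = i + k + 1 := by omega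
        rw [this]
        linarith
    have htIcc : ∀ i ≤ m, t i ∈ Set.Icc a b := by
      intro i hi
      constructor
      · rw [← ht0]
        have := hstep i 0 (by omega)
        simpa using this
      · rw [← htm]
        have := hstep (m - i) i (by omega)
        rwa [Nat.add_sub_cancel' hi] at this
    set C : ℕ → E := fun k =>
      Winv (t (k + 1)) * (V (ξ k) (t k) (t (k + 1)) - W (t (k + 1)) * Winv (t k)) * W (t k)
      with hCdef
    have key : ∀ k ≤ m, partProd V t ξ k = W (t k) * qprod C k * Winv a := by
      intro k
      induction k with
      | zero =>
        intro _
        show (1 : E) = W (t 0) * qprod C 0 * Winv a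
        rw [show qprod C 0 = (1 : E) from rfl, mul_one, ht0, (hinv a ha).1]
      | succ k ih =>
        intro hk1
        have hk : k ≤ m := by omega
        have hIk := htIcc k hk
        have hIk1 := htIcc (k + 1) hk1
        have h1 := (hinv (t (k + 1)) hIk1).1
        have h2 := (hinv (t k) hIk).1
        have h2' := (hinv (t k) hIk).2
        have hV : V (ξ k) (t k) (t (k + 1)) = W (t (k + 1)) * (1 + C k) * Winv (t k) := by
          rw [hCdef]
          simp only [mul_add, add_mul, mul_one]
          rw [← mul_assoc, ← mul_assoc, h1, one_mul, mul_assoc, h2, mul_one]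
          abel
        show V (ξ k) (t k) (t (k + 1)) * partProd V t ξ k = _
        rw [ih hk, hV]
        show _ = W (t (k + 1)) * ((1 + C k) * qprod C k) * Winv a
        calc W (t (k + 1)) * (1 + C k) * Winv (t k) * (W (t k) * qprod C k * Winv a)
            = W (t (k + 1)) * (1 + C k) * (Winv (t k) * W (t k)) * (qprod C k * Winv a) := by
              noncomm_ring
          _ = W (t (k + 1)) * ((1 + C k) * qprod C k) * Winv a := by
              rw [h2']; noncomm_ring
    have hkey := key m le_rfl
    rw [htm] at hkey
    set S : ℝ := ∑ i ∈ Finset.range m, ‖C i‖ with hSdef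
    set T : ℝ := ∑ i ∈ Finset.range m,
      ‖V (ξ i) (t i) (t (i + 1)) - W (t (i + 1)) * Winv (t i)‖ with hTdef
    have hTnn : 0 ≤ T := Finset.sum_nonneg fun i _ => norm_nonneg _
    have hST : S ≤ M ^ 2 * T := by
      rw [hSdef, hTdef, Finset.mul_sum]
      apply Finset.sum_le_sum
      intro i hi
      have hi' : i < m := Finset.mem_range.1 hi
      have hIi := htIcc i hi'.le
      have hIi1 := htIcc (i + 1) hi'
      calc ‖C i‖ ≤ ‖Winv (t (i + 1)) * (V (ξ i) (t i) (t (i + 1)) -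
              W (t (i + 1)) * Winv (t i))‖ * ‖W (t i)‖ := norm_mul_le _ _
        _ ≤ ‖Winv (t (i + 1))‖ * ‖V (ξ i) (t i) (t (i + 1)) -
              W (t (i + 1)) * Winv (t i)‖ * ‖W (t i)‖ := by
              gcongr; exact norm_mul_le _ _
        _ ≤ M * ‖V (ξ i) (t i) (t (i + 1)) - W (t (i + 1)) * Winv (t i)‖ * M := by
              apply mul_le_mul (mul_le_mul (hbd' _ hIi1).2 le_rfl (norm_nonneg _) hMpos.le)
                (hbd' _ hIi).1 (norm_nonneg _) (mul_nonneg hMpos.le (norm_nonneg _))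
        _ = M ^ 2 * ‖V (ξ i) (t i) (t (i + 1)) - W (t (i + 1)) * Winv (t i)‖ := by ring
    have hSnn : 0 ≤ S := Finset.sum_nonneg fun i _ => norm_nonneg _
    have hε01 : ε0 ≤ 1 / M ^ 2 := min_le_left _ _
    have hε02 : ε0 ≤ ε / (2 * M ^ 4) := min_le_right _ _
    have hSlt : S < M ^ 2 * ε0 := by
      calc S ≤ M ^ 2 * T := hST
        _ < M ^ 2 * ε0 := by
            apply mul_lt_mul_of_pos_left _ (by positivity)
            exact hsum
    have hS1 : S ≤ 1 := by
      have : M ^ 2 * ε0 ≤ M ^ 2 * (1 / M ^ 2) := by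
        apply mul_le_mul_of_nonneg_left hε01 (by positivity)
      have hM2 : M ^ 2 * (1 / M ^ 2) = 1 := by field_simp
      linarith
    have hQ := qprod_bound C m (by rw [← hSdef]; exact hS1)
    rw [← hSdef] at hQ
    have hdiff : partProd V t ξ m - W b * Winv a = W b * (qprod C m - 1) * Winv a := by
      rw [hkey]; noncomm_ring
    rw [hdiff]
    have hnorm : ‖W b * (qprod C m - 1) * Winv a‖ ≤ M * ‖qprod C m - 1‖ * M := by
      calc ‖W b * (qprod C m - 1) * Winv a‖
          ≤ ‖W b * (qprod C m - 1)‖ * ‖Winv a‖ := norm_mul_le _ _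
        _ ≤ ‖W b‖ * ‖qprod C m - 1‖ * ‖Winv a‖ := by gcongr; exact norm_mul_le _ _
        _ ≤ M * ‖qprod C m - 1‖ * M :=
            mul_le_mul (mul_le_mul (hbd' b hb).1 le_rfl (norm_nonneg _) hMpos.le)
              (hbd' a ha).2 (norm_nonneg _) (mul_nonneg hMpos.le (norm_nonneg _))
    have hε2 : 2 * M ^ 4 * ε0 ≤ ε := by
      have := mul_le_mul_of_nonneg_left hε02 (show (0:ℝ) ≤ 2 * M ^ 4 by positivity)
      have h4 : 2 * M ^ 4 * (ε / (2 * M ^ 4)) = ε := by field_simp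
      linarith
    have hfin : M * ‖qprod C m - 1‖ * M < ε := by
      have h1 : ‖qprod C m - 1‖ ≤ S + S ^ 2 := hQ
      have e1 : M * ‖qprod C m - 1‖ * M = M ^ 2 * ‖qprod C m - 1‖ := by ring
      have hX2 : ‖qprod C m - 1‖ ≤ 2 * S := by nlinarith [hSnn, hS1]
      have e2 : M ^ 2 * ‖qprod C m - 1‖ ≤ M ^ 2 * (2 * S) :=
        mul_le_mul_of_nonneg_left hX2 (by positivity)
      have e3 : M ^ 2 * (2 * S) < M ^ 2 * (2 * (M ^ 2 * ε0)) := by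
        apply mul_lt_mul_of_pos_left (by linarith) (by positivity)
      have e4 : M ^ 2 * (2 * (M ^ 2 * ε0)) = 2 * M ^ 4 * ε0 := by ring
      linarith
    linarith
end
end

section
/- Let A : [a,b] → E be an idempotent-valued mapping (A(t)·A(t) = A(t) for all t). If the Kurzweil-Stieltjes product integral ∏_a^b (I + dA(t)) exists, then the Kurzweil-Haahti product ∏_a^b A(t) exists and equals (∏_a^b (I + dA(t))) · A(a). The key algebraic identity is: for any partition a = t_0 < ⋯ < t_m = b, ∏_{i=m}^0 A(t_i) = (∏_{i=m}^1 (I + A(t_i) − A(t_{i−1}))) · A(a). -/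
open Set

noncomputable section

/-- The product A(t_m) A(t_{m-1}) ⋯ A(t_0) of values of A at the division points. -/
def haahtiProd {E : Type*} [NormedRing E] (A : ℝ → E) (t : ℕ → ℝ) : ℕ → E
  | 0 => A (t 0)
  | k + 1 => A (t (k + 1)) * haahtiProd A t k

/-- P is the Kurzweil-Haahti product of A over [a,b]. -/
def KurzweilHaahtiProd {E : Type*} [NormedRing E] (a b : ℝ) (A : ℝ → E) (P : E) : Prop :=
  ∀ ε > 0, ∃ δ : ℝ → ℝ, IsGauge a b δ ∧
    ∀ m t ξ, IsTaggedPartition a b m t ξ → IsFinePartition δ m t ξ →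
      ‖P - haahtiProd A t m‖ < ε


lemma partition_mem {a b : ℝ} {m : ℕ} {t ξ : ℕ → ℝ}
    (h : IsTaggedPartition a b m t ξ) : ∀ k ≤ m, t k ∈ Set.Icc a b := by
  obtain ⟨h0, hm, hinc, -⟩ := h
  have mono : ∀ j ≤ m, ∀ i ≤ j, t i ≤ t j := by
    intro j hjm
    induction j with
    | zero => intro i hi; simp [Nat.le_zero.mp hi]
    | succ n ih =>
      intro i hi
      rcases Nat.eq_or_lt_of_le hi with rfl | h'
      · exact le_rfl
      · exact (ih (by omega) i (by omega)).trans (hinc n (by omega)).le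
  intro k hk
  exact ⟨h0 ▸ mono k hk 0 (Nat.zero_le _), hm ▸ mono m le_rfl k hk⟩

lemma key_identity {E : Type*} [NormedRing E] {a b : ℝ} (A : ℝ → E)
    (hidem : ∀ s ∈ Set.Icc a b, A s * A s = A s)
    {m : ℕ} {t ξ : ℕ → ℝ} (h : IsTaggedPartition a b m t ξ) :
    ∀ k ≤ m, haahtiProd A t k = partProd (fun _ x y => (1:E) + A y - A x) t ξ k * A a := by
  intro k hk
  induction k with
  | zero =>
    simp [haahtiProd, partProd, h.1]
  | succ n ih =>
    have hn := ih (by omega)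
    have hmem : t n ∈ Set.Icc a b := partition_mem h n (by omega)
    have habs : A (t n) * haahtiProd A t n = haahtiProd A t n := by
      cases n with
      | zero =>
        show A (t 0) * A (t 0) = A (t 0)
        exact hidem _ hmem
      | succ p =>
        show A (t (p+1)) * (A (t (p+1)) * haahtiProd A t p) = _
        rw [← mul_assoc, hidem _ hmem, haahtiProd]
    show A (t (n+1)) * haahtiProd A t n = _
    rw [partProd, mul_assoc, ← hn, sub_mul, add_mul, one_mul, habs,
      add_sub_cancel_left]

/-- For an idempotent-valued mapping A, existence of the Kurzweil-Stieltjes product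
integral ∏(I + dA) implies existence of the Kurzweil-Haahti product ∏ A(t), which
equals (∏(I + dA)) · A(a);  moreover the key algebraic identity relating the two
kinds of products holds for every partition. -/
theorem stmt18 {E : Type*} [NormedRing E] [NormOneClass E]
    (a b : ℝ) (hab : a < b) (A : ℝ → E)
    (hidem : ∀ s ∈ Set.Icc a b, A s * A s = A s)
    (P : E) (hP : KurzweilProdIntegrable a b (fun _ x y => 1 + A y - A x) P) :
    KurzweilHaahtiProd a b A (P * A a) ∧
    (∀ m t ξ, IsTaggedPartition a b m t ξ →
      haahtiProd A t m = partProd (fun _ x y => 1 + A y - A x) t ξ m * A a) := by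
  have keyid : ∀ m t ξ, IsTaggedPartition a b m t ξ →
      haahtiProd A t m = partProd (fun _ x y => (1:E) + A y - A x) t ξ m * A a :=
    fun m t ξ h => key_identity A hidem h m le_rfl
  refine ⟨?_, keyid⟩
  intro ε hε
  set c := ‖A a‖ + 1 with hc
  have hc0 : 0 < c := by positivity
  obtain ⟨δ, hδ, hδ'⟩ := hP.2 (ε / c) (by positivity)
  refine ⟨δ, hδ, ?_⟩
  intro m t ξ hpart hfine
  rw [keyid m t ξ hpart, ← sub_mul]
  have h1 : ‖P - partProd (fun _ x y => (1:E) + A y - A x) t ξ m‖ < ε / c := by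
    rw [norm_sub_rev]; exact hδ' m t ξ hpart hfine
  calc ‖(P - partProd (fun _ x y => (1:E) + A y - A x) t ξ m) * A a‖
      ≤ ‖P - partProd (fun _ x y => (1:E) + A y - A x) t ξ m‖ * ‖A a‖ := norm_mul_le _ _
    _ ≤ ‖P - partProd (fun _ x y => (1:E) + A y - A x) t ξ m‖ * c :=
        mul_le_mul_of_nonneg_left (by simp [hc]) (norm_nonneg _)
    _ < (ε / c) * c := mul_lt_mul_of_pos_right h1 hc0
    _ = ε := div_mul_cancel₀ _ hc0.ne'
end
end
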